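/- arXiv:1202.5343 — 7 statements merged into one kernel-verified Lean document; each statement's English description precedes it below -/
import Mathlib

section
/- Let A and B be finitely generated groups and let Γ = A ≀ B be their restricted wreath product, with generating set {(1,s), (f_t, e_B) : s a generator of B, t a generator of A}, where f_t is the function supported on {e_B} with value t. Then for any element (f,b) ∈ Γ, the word length of (f,b) equals K(supp(f), b) + |f|, where K(supp(f), b) is the length of the shortest path in the Cayley graph of B from e_B to b passing through every point of supp(f), and |f| = Σ_{x∈B} |f(x)|_A is the sum of word lengths of the values of f. -/
/-- The action of `B` on `B → A` by translation: `(b • f)(x) = f(b⁻¹x)`. -/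
def shiftAut (A B : Type*) [Group A] [Group B] : B →* MulAut (B → A) where
  toFun b :=
    { toFun := fun f x => f (b⁻¹ * x)
      invFun := fun f x => f (b * x)
      left_inv := fun f => by funext x; simp [← mul_assoc]
      right_inv := fun f => by funext x; simp [← mul_assoc]
      map_mul' := fun f g => rfl }
  map_one' := MulEquiv.ext fun f => funext fun x => by simp
  map_mul' b c := MulEquiv.ext fun f => funext fun x => by
    simp [mul_assoc]

/-- The (unrestricted) wreath product `A ≀ B`; the restricted wreath product is
the set of its elements whose first component has finite (mul-)support. -/
abbrev WreathProduct (A B : Type*) [Group A] [Group B] :=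
  SemidirectProduct (B → A) B (shiftAut A B)

/-- Word length of `g` with respect to a (symmetrized) generating set `S`. -/
noncomputable def wordLength {G : Type*} [Group G] (S : Set G) (g : G) : ℕ :=
  sInf {n | ∃ l : List G, (∀ x ∈ l, x ∈ S ∨ x⁻¹ ∈ S) ∧ l.prod = g ∧ l.length = n}

open Classical in
/-- The function `f_t` supported on `{e_B}` with value `t`. -/
noncomputable def lampF {A B : Type*} [Group A] [Group B] (t : A) : B → A :=
  fun x => if x = 1 then t else 1

/-- The standard generating set `{(1,s), (f_t,e_B) : s ∈ X, t ∈ T}` of `A ≀ B`. -/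
def wreathGens {A B : Type*} [Group A] [Group B] (T : Finset A) (X : Finset B) :
    Set (WreathProduct A B) :=
  {γ | (∃ s ∈ X, γ = ⟨1, s⟩) ∨ ∃ t ∈ T, γ = ⟨lampF t, 1⟩}

/-- `K(supp f, b)`: the length of a shortest path in the Cayley graph of `B`
(w.r.t. `X`) from `e_B` to `b` passing through every point of `supp f`. -/
noncomputable def Kpath {A B : Type*} [Group A] [Group B] (X : Finset B)
    (f : B → A) (b : B) : ℕ :=
  sInf {n | ∃ l : List B, (∀ s ∈ l, s ∈ X ∨ s⁻¹ ∈ (X : Set B)) ∧ l.prod = b ∧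
    Function.mulSupport f ⊆ {c | ∃ j ≤ l.length, c = (l.take j).prod} ∧ l.length = n}

/-- `|f| = Σ_{x ∈ B} |f(x)|_A`. -/
noncomputable def lampNorm {A B : Type*} [Group A] [Group B] (T : Finset A)
    (f : B → A) : ℕ :=
  ∑ᶠ x : B, wordLength (T : Set A) (f x)

open Function

section WL
variable {G : Type*} [Group G] (S : Set G)

lemma wl_le {g : G} {l : List G} (hl : ∀ x ∈ l, x ∈ S ∨ x⁻¹ ∈ S) (hp : l.prod = g) :
    wordLength S g ≤ l.length := Nat.sInf_le ⟨l, hl, hp, rfl⟩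

lemma wl_one : wordLength S (1 : G) = 0 :=
  Nat.le_zero.mp (wl_le S (l := []) (by simp) (by simp))

lemma exists_word (hS : Subgroup.closure S = ⊤) (g : G) :
    ∃ l : List G, (∀ x ∈ l, x ∈ S ∨ x⁻¹ ∈ S) ∧ l.prod = g := by
  have hg : g ∈ Submonoid.closure (S ∪ S⁻¹) := by
    rw [← Subgroup.closure_toSubmonoid, hS]; trivial
  obtain ⟨l, hl, hp⟩ := Submonoid.exists_list_of_mem_closure hg
  exact ⟨l, fun x hx => by rcases hl x hx with h | h; exact Or.inl h; exact Or.inr h, hp⟩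

lemma wl_spec (hS : Subgroup.closure S = ⊤) (g : G) :
    ∃ l : List G, (∀ x ∈ l, x ∈ S ∨ x⁻¹ ∈ S) ∧ l.prod = g ∧ l.length = wordLength S g := by
  have hne : {n | ∃ l : List G, (∀ x ∈ l, x ∈ S ∨ x⁻¹ ∈ S) ∧ l.prod = g ∧ l.length = n}.Nonempty := by
    obtain ⟨l, h1, h2⟩ := exists_word S hS g
    exact ⟨l.length, l, h1, h2, rfl⟩
  exact Nat.sInf_mem hne

lemma wl_mul_le (hS : Subgroup.closure S = ⊤) (g h : G) :
    wordLength S (g * h) ≤ wordLength S g + wordLength S h := by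
  obtain ⟨l1, h1, p1, e1⟩ := wl_spec S hS g
  obtain ⟨l2, h2, p2, e2⟩ := wl_spec S hS h
  calc wordLength S (g * h) ≤ (l1 ++ l2).length := by
        refine wl_le S ?_ (by simp [p1, p2])
        intro x hx; rcases List.mem_append.mp hx with h | h
        exacts [h1 x h, h2 x h]
    _ = _ := by simp [e1, e2]

lemma wl_gen_le_one {g : G} (hg : g ∈ S ∨ g⁻¹ ∈ S) : wordLength S g ≤ 1 :=
  wl_le S (l := [g]) (by simpa using hg) (by simp)

end WL

section Pre
variable {G : Type*} [Group G]

/-- The set of prefix products of a list. -/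
def Pre (l : List G) : Set G := {c | ∃ j ≤ l.length, c = (l.take j).prod}

lemma one_mem_Pre (l : List G) : (1 : G) ∈ Pre l := ⟨0, Nat.zero_le _, by simp⟩

lemma Pre_nil : Pre ([] : List G) = {1} := by
  ext c; constructor
  · rintro ⟨j, hj, rfl⟩; simp
  · rintro rfl; exact one_mem_Pre _

lemma Pre_finite (l : List G) : (Pre l).Finite := by
  have : Pre l ⊆ (fun j => (l.take j).prod) '' (Set.Iic l.length) := by
    rintro c ⟨j, hj, rfl⟩; exact ⟨j, hj, rfl⟩
  exact ((Set.finite_Iic _).image _).subset this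

lemma mul_mem_Pre_cons {s c : G} {l : List G} (hc : c ∈ Pre l) : s * c ∈ Pre (s :: l) := by
  obtain ⟨j, hj, rfl⟩ := hc
  exact ⟨j + 1, by simpa using hj, by simp⟩

lemma mem_Pre_cons_iff {s c : G} {l : List G} :
    c ∈ Pre (s :: l) ↔ c = 1 ∨ ∃ d ∈ Pre l, c = s * d := by
  constructor
  · rintro ⟨j, hj, rfl⟩
    cases j with
    | zero => exact Or.inl (by simp)
    | succ j => exact Or.inr ⟨(l.take j).prod, ⟨j, by simpa using hj, rfl⟩, by simp⟩
  · rintro (rfl | ⟨d, hd, rfl⟩)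
    · exact one_mem_Pre _
    · exact mul_mem_Pre_cons hd

lemma prod_mem_Pre_append (a l : List G) : a.prod ∈ Pre (a ++ l) :=
  ⟨a.length, by simp, by simp⟩

lemma mul_mem_Pre_append {c : G} (a : List G) {l : List G} (hc : c ∈ Pre l) :
    a.prod * c ∈ Pre (a ++ l) := by
  obtain ⟨j, hj, rfl⟩ := hc
  exact ⟨a.length + j, by simp [hj], by rw [List.take_append]; simp [List.take_of_length_le (Nat.le_add_right a.length j)]⟩

end Pre

section Finsum
variable {α : Type*}

lemma finsum_le_finsum_nat (u v : α → ℕ) (h : ∀ x, u x ≤ v x)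
    (hv : (Function.support v).Finite) : ∑ᶠ x, u x ≤ ∑ᶠ x, v x := by
  have hsub : Function.support u ⊆ Function.support v := fun x hx => by
    simp only [Function.mem_support] at *
    intro h0; exact hx (Nat.le_zero.mp (h0 ▸ h x))
  rw [finsum_eq_sum_of_support_subset u (s := hv.toFinset) (by simpa using hsub),
    finsum_eq_sum_of_support_subset v (s := hv.toFinset) (by simp)]
  exact Finset.sum_le_sum fun i _ => h i

end Finsum

section Lamp
variable {A B : Type*} [Group A] [Group B]

@[simp] lemma lampF_apply_one (t : A) : lampF (B := B) t 1 = t := by simp [lampF]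

lemma lampF_apply_ne (t : A) {x : B} (hx : x ≠ 1) : lampF t x = 1 := by simp [lampF, hx]

@[simp] lemma lampF_one : lampF (B := B) (1 : A) = 1 := by
  funext x; by_cases hx : x = 1 <;> simp [lampF, hx]

lemma lampF_mul (s t : A) : lampF (B := B) (s * t) = lampF s * lampF t := by
  funext x; by_cases hx : x = 1 <;> simp [lampF, hx]

lemma lampF_inv (t : A) : (lampF (B := B) t)⁻¹ = lampF t⁻¹ := by
  funext x; by_cases hx : x = 1 <;> simp [lampF, hx]

lemma shiftAut_apply (b : B) (f : B → A) (x : B) : shiftAut A B b f x = f (b⁻¹ * x) := rfl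

lemma shiftAut_one_apply (f : B → A) : shiftAut A B 1 f = f := by
  rw [map_one]; rfl

end Lamp

section Wreath
open scoped Classical
variable {A B : Type*} [Group A] [Group B] (T : Finset A) (X : Finset B)

/-- Classification of elements of `wreathGens ∪ wreathGens⁻¹`. -/
def IsGood (γ : WreathProduct A B) : Prop :=
  (γ.left = 1 ∧ (γ.right ∈ X ∨ γ.right⁻¹ ∈ (X : Set B))) ∨
  (γ.right = 1 ∧ ∃ t : A, (t ∈ T ∨ t⁻¹ ∈ (T : Set A)) ∧ γ.left = lampF t)

lemma good_of_gen {γ : WreathProduct A B}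
    (hγ : γ ∈ wreathGens T X ∨ γ⁻¹ ∈ wreathGens T X) : IsGood T X γ := by
  rcases hγ with (⟨s, hs, rfl⟩ | ⟨t, ht, rfl⟩) | (⟨s, hs, h⟩ | ⟨t, ht, h⟩)
  · exact Or.inl ⟨rfl, Or.inl hs⟩
  · exact Or.inr ⟨rfl, t, Or.inl ht, rfl⟩
  · have : γ = (⟨1, s⟩ : WreathProduct A B)⁻¹ := by rw [← h]; simp
    subst this
    refine Or.inl ⟨?_, Or.inr (by simpa using hs)⟩
    show shiftAut A B s⁻¹ (1 : B → A)⁻¹ = 1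
    simp
  · have : γ = (⟨lampF t, 1⟩ : WreathProduct A B)⁻¹ := by rw [← h]; simp
    subst this
    refine Or.inr ⟨by simp, t⁻¹, Or.inr (by simpa using ht), ?_⟩
    show shiftAut A B 1⁻¹ (lampF t)⁻¹ = lampF t⁻¹
    rw [lampF_inv, inv_one, shiftAut_one_apply]

lemma lampNorm_shift (f : B → A) (s : B) :
    lampNorm T (fun x => f (s * x)) = lampNorm T f := by
  unfold lampNorm
  exact finsum_comp_equiv (Equiv.mulLeft s) (f := fun y => wordLength (T : Set A) (f y))

lemma support_wordLength_subset (f : B → A) :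
    Function.support (fun x => wordLength (T : Set A) (f x)) ⊆ Function.mulSupport f := by
  intro x hx
  simp only [Function.mem_support, Function.mem_mulSupport] at *
  intro h0; exact hx (by rw [h0, wl_one])

lemma lampNorm_lamp_mul_le (hT : Subgroup.closure (T : Set A) = ⊤) {t : A}
    (ht : t ∈ T ∨ t⁻¹ ∈ (T : Set A)) (g : B → A) (hg : (Function.mulSupport g).Finite) :
    lampNorm T (lampF t * g) ≤ 1 + lampNorm T g := by
  set v : B → ℕ := fun x => (if x = 1 then 1 else 0) + wordLength (T : Set A) (g x) with hv
  have hvs : (Function.support v).Finite := by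
    refine Set.Finite.subset (hg.union (Set.finite_singleton 1)) ?_
    intro x hx
    simp only [Function.mem_support, hv] at hx
    by_cases hx1 : x = 1
    · exact Or.inr hx1
    · simp only [hx1, if_neg, ite_false, zero_add] at hx
      exact Or.inl (support_wordLength_subset T g (by simpa using hx))
  have hle : ∀ x, wordLength (T : Set A) ((lampF t * g : B → A) x) ≤ v x := by
    intro x
    by_cases hx : x = 1
    · subst hx
      simp only [hv, if_pos rfl, Pi.mul_apply, lampF_apply_one]
      calc wordLength (T : Set A) (t * g 1)
          ≤ wordLength (T : Set A) t + wordLength (T : Set A) (g 1) := wl_mul_le _ hT _ _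
        _ ≤ 1 + wordLength (T : Set A) (g 1) :=
            Nat.add_le_add_right (wl_gen_le_one _ ht) _
    · simp [hv, hx, Pi.mul_apply, lampF_apply_ne t hx]
  calc lampNorm T (lampF t * g) ≤ ∑ᶠ x, v x := finsum_le_finsum_nat _ v hle hvs
    _ = (∑ᶠ x : B, if x = 1 then 1 else 0) + ∑ᶠ x, wordLength (T : Set A) (g x) := by
        rw [← finsum_add_distrib]
        · exact (Set.finite_singleton 1).subset (fun x hx => by
            by_contra h1; rw [Set.mem_singleton_iff] at h1; simp [Function.mem_support, h1] at hx)
        · exact hg.subset (support_wordLength_subset T g)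
    _ = 1 + lampNorm T g := by
        rw [finsum_eq_single _ (1 : B) (fun x hx => by simp [hx])]
        simp [lampNorm]

lemma lampNorm_update (f : B → A) (hf : (Function.mulSupport f).Finite) :
    lampNorm T f = wordLength (T : Set A) (f 1) + lampNorm T (Function.update f 1 1) := by
  have key : ∀ x, wordLength (T : Set A) (f x) =
      (if x = 1 then wordLength (T : Set A) (f 1) else 0) +
        wordLength (T : Set A) (Function.update f 1 1 x) := by
    intro x
    by_cases hx : x = 1
    · subst hx; simp [wl_one]
    · simp [hx, Function.update_of_ne hx]
  calc lampNorm T f = ∑ᶠ x, ((if x = 1 then wordLength (T : Set A) (f 1) else 0) +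
        wordLength (T : Set A) (Function.update f 1 1 x)) := by
        unfold lampNorm; exact finsum_congr key
    _ = _ := by
        rw [finsum_add_distrib, finsum_eq_single _ (1 : B) (fun x hx => by simp [hx])]
        · simp [lampNorm]
        · exact (Set.finite_singleton 1).subset (fun x hx => by
            by_contra h1; rw [Set.mem_singleton_iff] at h1; simp [Function.mem_support, h1] at hx)
        · refine ((hf.union (Set.finite_singleton 1)).subset ?_)
          intro x hx
          by_cases h1 : x = 1
          · exact Or.inr h1
          · refine Or.inl ?_
            have := support_wordLength_subset T (Function.update f 1 1) hx
            simpa [Function.mem_mulSupport, Function.update_of_ne h1] using this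

end Wreath

section Lower
open scoped Classical
variable {A B : Type*} [Group A] [Group B] (T : Finset A) (X : Finset B)

lemma lower_master (hT : Subgroup.closure (T : Set A) = ⊤)
    (w : List (WreathProduct A B)) (hw : ∀ γ ∈ w, IsGood T X γ) :
    ∃ l : List B, (∀ s ∈ l, s ∈ X ∨ s⁻¹ ∈ (X : Set B)) ∧ l.prod = w.prod.right ∧
      Function.mulSupport w.prod.left ⊆ Pre l ∧
      (Function.mulSupport w.prod.left).Finite ∧
      lampNorm T w.prod.left + l.length ≤ w.length := by
  induction w with
  | nil =>
    refine ⟨[], by simp, by simp, ?_, ?_, ?_⟩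
    · simp [Function.mulSupport]
    · simp [Function.mulSupport]
    · simp [lampNorm, wl_one]
  | cons γ w ih =>
    obtain ⟨l, hl1, hl2, hl3, hl4, hl5⟩ := ih (fun x hx => hw x (List.mem_cons_of_mem _ hx))
    set g := w.prod.left with hg
    rcases hw γ (List.mem_cons_self) with ⟨hleft, hs⟩ | ⟨hright, t, ht, hleft⟩
    · -- move letter
      have hF : (γ :: w).prod.left = fun x => g (γ.right⁻¹ * x) := by
        funext x
        rw [List.prod_cons, SemidirectProduct.mul_left, hleft, one_mul]
        rfl
      refine ⟨γ.right :: l, ?_, by simp [hl2], ?_, ?_, ?_⟩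
      · intro s hs'
        rcases List.mem_cons.mp hs' with rfl | h
        · exact hs
        · exact hl1 s h
      · intro x hx
        rw [hF] at hx
        have : γ.right⁻¹ * x ∈ Pre l := hl3 (by simpa using hx)
        have := mul_mem_Pre_cons (s := γ.right) this
        simpa [mul_assoc] using this
      · rw [hF]
        refine Set.Finite.subset (hl4.image (fun y => γ.right * y)) ?_
        intro x hx
        exact ⟨γ.right⁻¹ * x, by simpa using hx, by simp⟩
      · rw [hF]
        have h6 : lampNorm T (fun x => g (γ.right⁻¹ * x)) = lampNorm T g := lampNorm_shift T g _
        rw [h6, List.length_cons, List.length_cons]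
        omega
    · -- lamp letter
      have hF : (γ :: w).prod.left = lampF t * g := by
        rw [List.prod_cons, SemidirectProduct.mul_left, hleft, hright, shiftAut_one_apply]
      refine ⟨l, hl1, by simp [hl2, hright], ?_, ?_, ?_⟩
      · intro x hx
        rw [hF] at hx
        by_cases h1 : x = 1
        · exact h1 ▸ one_mem_Pre l
        · refine hl3 ?_
          have : (lampF t * g : B → A) x ≠ 1 := hx
          rw [Pi.mul_apply, lampF_apply_ne t h1, one_mul] at this
          exact this
      · rw [hF]
        refine Set.Finite.subset (hl4.union (Set.finite_singleton 1)) ?_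
        intro x hx
        by_cases h1 : x = 1
        · exact Or.inr h1
        · have : (lampF t * g : B → A) x ≠ 1 := hx
          rw [Pi.mul_apply, lampF_apply_ne t h1, one_mul] at this
          exact Or.inl this
      · rw [hF]
        calc lampNorm T (lampF t * g) + l.length ≤ 1 + lampNorm T g + l.length :=
              Nat.add_le_add_right (lampNorm_lamp_mul_le T hT ht g hl4) _
          _ = 1 + (lampNorm T g + l.length) := by omega
          _ ≤ 1 + w.length := Nat.add_le_add_left hl5 _
          _ = (γ :: w).length := by simp [Nat.add_comm]

end Lower

section Upper
open scoped Classical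
variable {A B : Type*} [Group A] [Group B] (T : Finset A) (X : Finset B)

/-- The word depositing lamp values along a path. `c a` is a chosen word for `a`. -/
noncomputable def upWord (c : A → List A) : List B → (B → A) → List (WreathProduct A B)
  | [], f => (c (f 1)).map (fun t => ⟨lampF t, 1⟩)
  | s :: l, f => (c (f 1)).map (fun t => ⟨lampF t, 1⟩) ++
      ⟨1, s⟩ :: upWord c l (fun x => Function.update f 1 1 (s * x))

lemma lampList_prod (u : List A) :
    (u.map fun t => (⟨lampF t, 1⟩ : WreathProduct A B)).prod = ⟨lampF u.prod, 1⟩ := by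
  induction u with
  | nil => simp
  | cons t u ih =>
    rw [List.map_cons, List.prod_cons, ih, List.prod_cons]
    refine SemidirectProduct.ext ?_ (by simp)
    rw [SemidirectProduct.mul_left]
    show lampF t * shiftAut A B 1 (lampF u.prod) = _
    rw [shiftAut_one_apply, ← lampF_mul]

lemma upWord_letters (c : A → List A)
    (hc : ∀ a, ∀ x ∈ c a, x ∈ T ∨ x⁻¹ ∈ (T : Set A)) :
    ∀ (l : List B) (f : B → A), (∀ s ∈ l, s ∈ X ∨ s⁻¹ ∈ (X : Set B)) →
      ∀ γ ∈ upWord c l f, γ ∈ wreathGens T X ∨ γ⁻¹ ∈ wreathGens T X := by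
  have lamp_case : ∀ (a : A) (γ : WreathProduct A B),
      γ ∈ ((c a).map fun t => (⟨lampF t, 1⟩ : WreathProduct A B)) →
      γ ∈ wreathGens T X ∨ γ⁻¹ ∈ wreathGens T X := by
    intro a γ hγ
    obtain ⟨t, ht, rfl⟩ := List.mem_map.mp hγ
    rcases hc a t ht with h | h
    · exact Or.inl (Or.inr ⟨t, h, rfl⟩)
    · refine Or.inr (Or.inr ⟨t⁻¹, h, ?_⟩)
      refine SemidirectProduct.ext ?_ (by simp)
      show shiftAut A B 1⁻¹ (lampF t)⁻¹ = lampF t⁻¹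
      rw [lampF_inv, inv_one, shiftAut_one_apply]
  intro l
  induction l with
  | nil => intro f _ γ hγ; exact lamp_case _ γ hγ
  | cons s l ih =>
    intro f hl γ hγ
    rcases List.mem_append.mp hγ with h | h
    · exact lamp_case _ γ h
    · rcases List.mem_cons.mp h with rfl | h
      · rcases hl s (List.mem_cons_self) with h | h
        · exact Or.inl (Or.inl ⟨s, h, rfl⟩)
        · refine Or.inr (Or.inl ⟨s⁻¹, h, ?_⟩)
          refine SemidirectProduct.ext ?_ (by simp)
          show shiftAut A B s⁻¹ (1 : B → A)⁻¹ = 1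
          simp
      · exact ih _ (fun x hx => hl x (List.mem_cons_of_mem _ hx)) γ h

lemma upWord_prod (c : A → List A) (hc : ∀ a, (c a).prod = a) :
    ∀ (l : List B) (f : B → A), Function.mulSupport f ⊆ Pre l →
      (upWord c l f).prod = ⟨f, l.prod⟩ := by
  intro l
  induction l with
  | nil =>
    intro f hf
    rw [upWord, lampList_prod, hc]
    refine SemidirectProduct.ext ?_ (by simp)
    show lampF (f 1) = f
    funext x
    by_cases hx : x = 1
    · subst hx; simp
    · rw [lampF_apply_ne _ hx]
      by_contra h
      have : x ∈ Pre ([] : List B) := hf (Ne.symm h)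
      rw [Pre_nil] at this
      exact hx this
  | cons s l ih =>
    intro f hf
    have hsupp : Function.mulSupport (fun x => Function.update f 1 1 (s * x)) ⊆ Pre l := by
      intro x hx
      have hne : Function.update f 1 1 (s * x) ≠ 1 := hx
      have hsx : s * x ≠ 1 := by
        intro h; rw [h] at hne; simp at hne
      rw [Function.update_of_ne hsx] at hne
      have : s * x ∈ Pre (s :: l) := hf hne
      rcases mem_Pre_cons_iff.mp this with h | ⟨d, hd, h⟩
      · exact absurd h hsx
      · have : x = d := by
          have := mul_left_cancel (a := s) h
          exact this
        exact this ▸ hd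
    rw [upWord, List.prod_append, List.prod_cons, lampList_prod, hc, ih _ hsupp]
    refine SemidirectProduct.ext ?_ (by simp)
    rw [SemidirectProduct.mul_left, SemidirectProduct.mul_left]
    show lampF (f 1) * shiftAut A B 1
        (1 * shiftAut A B s (fun x => Function.update f 1 1 (s * x))) = f
    rw [shiftAut_one_apply, one_mul]
    have hsh : shiftAut A B s (fun x => Function.update f 1 1 (s * x)) =
        Function.update f 1 1 := by
      funext x
      show Function.update f 1 1 (s * (s⁻¹ * x)) = Function.update f 1 1 x
      rw [mul_inv_cancel_left]
    rw [hsh]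
    funext x
    by_cases hx : x = 1
    · subst hx; simp
    · simp [lampF_apply_ne _ hx, Function.update_of_ne hx]

lemma upWord_length (c : A → List A) (hc : ∀ a, (c a).length = wordLength (T : Set A) a) :
    ∀ (l : List B) (f : B → A), Function.mulSupport f ⊆ Pre l →
      (upWord c l f).length = l.length + lampNorm T f := by
  intro l
  induction l with
  | nil =>
    intro f hf
    rw [upWord, List.length_map, hc]
    have : lampNorm T f = wordLength (T : Set A) (f 1) := by
      unfold lampNorm
      refine finsum_eq_single _ (1 : B) (fun x hx => ?_)
      have : x ∉ Function.mulSupport f := by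
        intro h
        have := hf h
        rw [Pre_nil] at this
        exact hx this
      rw [Function.notMem_mulSupport.mp this, wl_one]
    rw [this]; simp
  | cons s l ih =>
    intro f hf
    have hfin : (Function.mulSupport f).Finite := (Pre_finite _).subset hf
    have hsupp : Function.mulSupport (fun x => Function.update f 1 1 (s * x)) ⊆ Pre l := by
      intro x hx
      have hne : Function.update f 1 1 (s * x) ≠ 1 := hx
      have hsx : s * x ≠ 1 := by
        intro h; rw [h] at hne; simp at hne
      rw [Function.update_of_ne hsx] at hne
      have : s * x ∈ Pre (s :: l) := hf hne
      rcases mem_Pre_cons_iff.mp this with h | ⟨d, hd, h⟩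
      · exact absurd h hsx
      · exact (mul_left_cancel (a := s) h) ▸ hd
    rw [upWord, List.length_append, List.length_cons, List.length_map, hc, ih _ hsupp]
    have h1 : lampNorm T (fun x => Function.update f 1 1 (s * x)) =
        lampNorm T (Function.update f 1 1) := lampNorm_shift T _ s
    rw [h1, lampNorm_update T f hfin, List.length_cons]
    omega

lemma exists_path (hX : Subgroup.closure (X : Set B) = ⊤) {F : Set B} (hF : F.Finite) (b : B) :
    ∃ l : List B, (∀ s ∈ l, s ∈ X ∨ s⁻¹ ∈ (X : Set B)) ∧ l.prod = b ∧ F ⊆ Pre l := by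
  obtain ⟨u0, rfl⟩ : ∃ s : Finset B, F = ↑s := ⟨hF.toFinset, by simp⟩
  clear hF
  induction u0 using Finset.induction_on with
  | empty =>
    obtain ⟨l, h1, h2⟩ := exists_word (X : Set B) hX b
    exact ⟨l, h1, h2, by simp⟩
  | insert _ _ ha ih =>
    rename_i a F'
    obtain ⟨l, hl1, hl2, hl3⟩ := ih
    obtain ⟨u, hu1, hu2⟩ := exists_word (X : Set B) hX a
    set v := (u.map fun x => x⁻¹).reverse with hv
    have hvprod : v.prod = a⁻¹ := by
      rw [hv, ← List.prod_inv_reverse, hu2]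
    have hvmem : ∀ s ∈ v, s ∈ X ∨ s⁻¹ ∈ (X : Set B) := by
      intro s hs
      rw [hv, List.mem_reverse, List.mem_map] at hs
      obtain ⟨y, hy, rfl⟩ := hs
      rcases hu1 y hy with h | h
      · exact Or.inr (by simpa using h)
      · exact Or.inl (by simpa using h)
    refine ⟨u ++ (v ++ l), ?_, ?_, ?_⟩
    · intro s hs
      rcases List.mem_append.mp hs with h | h
      · exact hu1 s h
      rcases List.mem_append.mp h with h | h
      · exact hvmem s h
      · exact hl1 s h
    · rw [List.prod_append, List.prod_append, hu2, hvprod, hl2, ← mul_assoc,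
        mul_inv_cancel, one_mul]
    · intro x hx
      rw [Finset.coe_insert] at hx
      rcases Set.mem_insert_iff.mp hx with rfl | hx
      · have := prod_mem_Pre_append u (v ++ l)
        rwa [hu2] at this
      · have hc : x ∈ Pre l := hl3 hx
        have := mul_mem_Pre_append (u ++ v) hc
        rw [List.prod_append, hu2, hvprod, mul_inv_cancel, one_mul] at this
        rwa [List.append_assoc] at this

end Upper

theorem wreath_word_length' {A B : Type*} [Group A] [Group B]
    (T : Finset A) (X : Finset B)
    (hT : Subgroup.closure (T : Set A) = ⊤) (hX : Subgroup.closure (X : Set B) = ⊤)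
    (γ : ↥(Subgroup.closure (wreathGens T X))) :
    wordLength {g : ↥(Subgroup.closure (wreathGens T X)) |
        (g : WreathProduct A B) ∈ wreathGens T X} γ =
      Kpath X (γ : WreathProduct A B).left (γ : WreathProduct A B).right +
        lampNorm T (γ : WreathProduct A B).left := by
  classical
  -- Step 1: an ambient word for `↑γ`, giving finiteness of the support
  have hdmem : (γ : WreathProduct A B) ∈
      Submonoid.closure (wreathGens T X ∪ (wreathGens T X)⁻¹) := by
    rw [← Subgroup.closure_toSubmonoid]
    exact γ.2
  obtain ⟨w0, hw0mem, hw0prod⟩ := Submonoid.exists_list_of_mem_closure hdmem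
  have hw0good : ∀ x ∈ w0, IsGood T X x := by
    intro x hx
    refine good_of_gen T X ?_
    rcases hw0mem x hx with h | h
    · exact Or.inl h
    · exact Or.inr (Set.mem_inv.mp h)
  obtain ⟨l0, -, -, -, hfin0, -⟩ := lower_master T X hT w0 hw0good
  rw [hw0prod] at hfin0
  -- Step 2: minimal Kpath witness
  have hKne : {n | ∃ l : List B, (∀ s ∈ l, s ∈ X ∨ s⁻¹ ∈ (X : Set B)) ∧
      l.prod = (γ : WreathProduct A B).right ∧
      Function.mulSupport (γ : WreathProduct A B).left ⊆
        {c | ∃ j ≤ l.length, c = (l.take j).prod} ∧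
      l.length = n}.Nonempty := by
    obtain ⟨l, h1, h2, h3⟩ := exists_path X hX hfin0 (γ : WreathProduct A B).right
    exact ⟨l.length, l, h1, h2, h3, rfl⟩
  obtain ⟨l, hl1, hl2, hl3, hl4⟩ := Nat.sInf_mem hKne
  have hl3' : Function.mulSupport (γ : WreathProduct A B).left ⊆ Pre l := hl3
  -- Step 3: choice of minimal words in A
  choose cA hc1 hc2 hc3 using fun a => wl_spec (T : Set A) hT a
  -- Step 4: the upper-bound word
  have hwprod : (upWord cA l (γ : WreathProduct A B).left).prod = (γ : WreathProduct A B) := by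
    rw [upWord_prod cA hc2 l (γ : WreathProduct A B).left hl3', hl2]
  have hwlen : (upWord cA l (γ : WreathProduct A B).left).length =
      Kpath X (γ : WreathProduct A B).left (γ : WreathProduct A B).right +
        lampNorm T (γ : WreathProduct A B).left := by
    rw [upWord_length T cA hc3 l (γ : WreathProduct A B).left hl3', hl4]
    rfl
  have hwlet : ∀ x ∈ upWord cA l (γ : WreathProduct A B).left,
      x ∈ wreathGens T X ∨ x⁻¹ ∈ wreathGens T X :=
    upWord_letters T X cA hc1 l (γ : WreathProduct A B).left hl1
  have hmemG0 : ∀ x ∈ upWord cA l (γ : WreathProduct A B).left,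
      x ∈ Subgroup.closure (wreathGens T X) := by
    intro x hx
    rcases hwlet x hx with h | h
    · exact Subgroup.subset_closure h
    · exact (Subgroup.inv_mem_iff _).mp (Subgroup.subset_closure h)
  have hwsmap : ((upWord cA l (γ : WreathProduct A B).left).pmap
        (fun x h => (⟨x, h⟩ : ↥(Subgroup.closure (wreathGens T X)))) hmemG0).map
        (Subgroup.subtype _) = upWord cA l (γ : WreathProduct A B).left := by
    rw [List.map_pmap]
    exact (List.pmap_eq_map _).trans (List.map_id _)
  have hwsprod : ((upWord cA l (γ : WreathProduct A B).left).pmap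
      (fun x h => (⟨x, h⟩ : ↥(Subgroup.closure (wreathGens T X)))) hmemG0).prod = γ := by
    apply Subtype.ext
    have h := map_list_prod (Subgroup.subtype (Subgroup.closure (wreathGens T X)))
      ((upWord cA l (γ : WreathProduct A B).left).pmap
        (fun x h => (⟨x, h⟩ : ↥(Subgroup.closure (wreathGens T X)))) hmemG0)
    rw [hwsmap, hwprod] at h
    exact h
  have hwslet : ∀ x ∈ (upWord cA l (γ : WreathProduct A B).left).pmap
      (fun x h => (⟨x, h⟩ : ↥(Subgroup.closure (wreathGens T X)))) hmemG0,
      x ∈ {g : ↥(Subgroup.closure (wreathGens T X)) | (g : WreathProduct A B) ∈ wreathGens T X} ∨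
      x⁻¹ ∈ {g : ↥(Subgroup.closure (wreathGens T X)) |
        (g : WreathProduct A B) ∈ wreathGens T X} := by
    intro x hx
    obtain ⟨a, ha, rfl⟩ := List.mem_pmap.mp hx
    rcases hwlet a ha with h | h
    · exact Or.inl h
    · exact Or.inr h
  have upper : wordLength {g : ↥(Subgroup.closure (wreathGens T X)) |
      (g : WreathProduct A B) ∈ wreathGens T X} γ ≤
      Kpath X (γ : WreathProduct A B).left (γ : WreathProduct A B).right +
        lampNorm T (γ : WreathProduct A B).left := by
    have h := wl_le _ hwslet hwsprod
    rwa [List.length_pmap, hwlen] at h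
  -- Step 5: lower bound
  have hRne : {n | ∃ ω : List ↥(Subgroup.closure (wreathGens T X)),
      (∀ x ∈ ω, x ∈ {g : ↥(Subgroup.closure (wreathGens T X)) |
        (g : WreathProduct A B) ∈ wreathGens T X} ∨
        x⁻¹ ∈ {g : ↥(Subgroup.closure (wreathGens T X)) |
          (g : WreathProduct A B) ∈ wreathGens T X}) ∧ ω.prod = γ ∧
      ω.length = n}.Nonempty :=
    ⟨_, _, hwslet, hwsprod, rfl⟩
  obtain ⟨ω, hω1, hω2, hω3⟩ := Nat.sInf_mem hRne
  have hambprod : (ω.map (Subgroup.subtype _)).prod = (γ : WreathProduct A B) := by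
    rw [← map_list_prod (Subgroup.subtype _) ω, hω2]
    rfl
  have hambgood : ∀ x ∈ ω.map (Subgroup.subtype (Subgroup.closure (wreathGens T X))),
      IsGood T X x := by
    intro x hx
    obtain ⟨y, hy, rfl⟩ := List.mem_map.mp hx
    refine good_of_gen T X ?_
    rcases hω1 y hy with h | h
    · exact Or.inl h
    · exact Or.inr h
  obtain ⟨l', p1, p2, p3, -, p5⟩ :=
    lower_master T X hT (ω.map (Subgroup.subtype _)) hambgood
  rw [hambprod] at p2 p3 p5
  have hK : Kpath X (γ : WreathProduct A B).left (γ : WreathProduct A B).right ≤ l'.length :=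
    Nat.sInf_le ⟨l', p1, p2, p3, rfl⟩
  have lower : Kpath X (γ : WreathProduct A B).left (γ : WreathProduct A B).right +
      lampNorm T (γ : WreathProduct A B).left ≤
      wordLength {g : ↥(Subgroup.closure (wreathGens T X)) |
        (g : WreathProduct A B) ∈ wreathGens T X} γ := by
    have h1 : Kpath X (γ : WreathProduct A B).left (γ : WreathProduct A B).right +
        lampNorm T (γ : WreathProduct A B).left ≤
        (ω.map (Subgroup.subtype (Subgroup.closure (wreathGens T X)))).length := by
      omega
    rw [List.length_map, hω3] at h1
    exact h1
  exact le_antisymm upper lower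

/-- in the restricted wreath product `Γ = A ≀ B` (realized as the
subgroup of the wreath product generated by `{(1,s), (f_t,e_B)}`), the word
length of `(f,b)` equals `K(supp f, b) + |f|`. -/
theorem wreath_word_length {A B : Type*} [Group A] [Group B]
    (T : Finset A) (X : Finset B)
    (hT : Subgroup.closure (T : Set A) = ⊤) (hX : Subgroup.closure (X : Set B) = ⊤)
    (γ : ↥(Subgroup.closure (wreathGens T X))) :
    wordLength {g : ↥(Subgroup.closure (wreathGens T X)) |
        (g : WreathProduct A B) ∈ wreathGens T X} γ =
      Kpath X (γ : WreathProduct A B).left (γ : WreathProduct A B).right +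
        lampNorm T (γ : WreathProduct A B).left := by
  exact wreath_word_length' T X hT hX γ
end

section
/- (Fundamental formula of Fox calculus) Let F be the free group on x_1, ..., x_r and let a be an element of the integral group ring Z(F). Then a − ε(a)·1 = Σ_{i=1}^r (∂a/∂x_i)(x_i − 1), where ε: Z(F) → Z is the augmentation map and ∂/∂x_i are the Fox derivatives. -/
/-- The augmentation map `ℤ(F) → ℤ`, sending each group element to `1`. -/
noncomputable def augZ (G : Type*) [Group G] : MonoidAlgebra ℤ G →ₐ[ℤ] ℤ :=
  MonoidAlgebra.lift ℤ ℤ G 1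

lemma augZ_of {G : Type*} [Group G] (g : G) :
    augZ G (MonoidAlgebra.of ℤ G g) = 1 := by
  simp [augZ]

/-- Fundamental formula of Fox calculus: if `D i` are the Fox
derivatives on `ℤ(F)`, `F` free on `x_1, …, x_r` (i.e. additive maps satisfying
the derivation law `D(ab) = D(a)ε(b) + a·D(b)` and `∂x_j/∂x_i = δ_{ij}`), then
for every `a ∈ ℤ(F)` we have `a - ε(a)·1 = ∑ i, (∂a/∂x_i)·(x_i - 1)`. -/
theorem fox_fundamental_formula {r : ℕ}
    (D : Fin r → (MonoidAlgebra ℤ (FreeGroup (Fin r)) →+ MonoidAlgebra ℤ (FreeGroup (Fin r))))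
    (hder : ∀ i a b, D i (a * b) = augZ _ b • D i a + a * D i b)
    (hbase : ∀ i j, D i (MonoidAlgebra.of ℤ (FreeGroup (Fin r)) (FreeGroup.of j)) =
      if i = j then 1 else 0) :
    ∀ a : MonoidAlgebra ℤ (FreeGroup (Fin r)),
      a - augZ _ a • (1 : MonoidAlgebra ℤ (FreeGroup (Fin r))) =
        ∑ i, D i a * (MonoidAlgebra.of ℤ (FreeGroup (Fin r)) (FreeGroup.of i) - 1) := by
  let F := FreeGroup (Fin r)
  set X : Fin r → MonoidAlgebra ℤ F := fun i => MonoidAlgebra.of ℤ F (FreeGroup.of i) with hX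
  have hpure : ∀ j : Fin r, (pure j : FreeGroup (Fin r)) = FreeGroup.of j := fun _ => rfl
  have hD1 : ∀ i, D i (1 : MonoidAlgebra ℤ F) = 0 := by
    intro i
    have h := hder i 1 1
    rw [mul_one, map_one (augZ F), one_smul, one_mul] at h
    exact (left_eq_add.mp h)
  have key : ∀ g : F, MonoidAlgebra.of ℤ F g - 1 =
      ∑ i, D i (MonoidAlgebra.of ℤ F g) * (X i - 1) := by
    intro g
    induction g using FreeGroup.induction_on with
    | C1 =>
      rw [map_one, sub_self]
      rw [Finset.sum_congr rfl (fun i _ => by rw [hD1 i, zero_mul])]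
      simp
    | of j =>
      rw [Finset.sum_congr rfl (fun i _ => by rw [hbase i j, ite_mul, one_mul, zero_mul])]
      rw [Finset.sum_ite_eq' Finset.univ j (fun i => X i - 1)]
      simp [X]
    | inv_of j hj =>
      set u := MonoidAlgebra.of ℤ F (FreeGroup.of j) with hu
      set v := MonoidAlgebra.of ℤ F ((FreeGroup.of j)⁻¹) with hv
      have hvu : v * u = 1 := by
        rw [hu, hv, ← map_mul, inv_mul_cancel, map_one]
      have hDv : ∀ i, D i v = -(v * D i u) := by
        intro i
        have h := hder i v u
        rw [hvu, hD1, augZ_of, one_smul] at h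
        exact eq_neg_of_add_eq_zero_left h.symm
      calc v - 1 = -(v * (u - 1)) := by
            rw [mul_sub, hvu, mul_one, neg_sub]
        _ = -(v * ∑ i, D i u * (X i - 1)) := by rw [← hj]
        _ = ∑ i, D i v * (X i - 1) := by
            rw [Finset.mul_sum, ← Finset.sum_neg_distrib]
            exact Finset.sum_congr rfl (fun i _ => by rw [hDv i, neg_mul, mul_assoc])
    | mul x y hx hy =>
      rw [map_mul]
      have : ∀ i, D i (MonoidAlgebra.of ℤ F x * MonoidAlgebra.of ℤ F y) =
          D i (MonoidAlgebra.of ℤ F x) + MonoidAlgebra.of ℤ F x * D i (MonoidAlgebra.of ℤ F y) := by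
        intro i
        rw [hder, augZ_of, one_smul]
      calc MonoidAlgebra.of ℤ F x * MonoidAlgebra.of ℤ F y - 1
          = (MonoidAlgebra.of ℤ F x - 1) +
            MonoidAlgebra.of ℤ F x * (MonoidAlgebra.of ℤ F y - 1) := by rw [mul_sub, mul_one]; abel
        _ = ∑ i, D i (MonoidAlgebra.of ℤ F x) * (X i - 1) +
            MonoidAlgebra.of ℤ F x * ∑ i, D i (MonoidAlgebra.of ℤ F y) * (X i - 1) := by
            rw [← hx, ← hy]
        _ = ∑ i, (D i (MonoidAlgebra.of ℤ F x) +
              MonoidAlgebra.of ℤ F x * D i (MonoidAlgebra.of ℤ F y)) * (X i - 1) := by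
            rw [Finset.mul_sum, ← Finset.sum_add_distrib]
            exact Finset.sum_congr rfl (fun i _ => by rw [add_mul, mul_assoc])
        _ = ∑ i, D i (MonoidAlgebra.of ℤ F x * MonoidAlgebra.of ℤ F y) * (X i - 1) :=
            Finset.sum_congr rfl (fun i _ => by rw [this i])
  intro a
  induction a using MonoidAlgebra.induction_on with
  | of g => rw [augZ_of, one_smul]; exact key g
  | add f g hf hg =>
    rw [map_add, add_smul]
    calc f + g - (augZ F f • 1 + augZ F g • 1)
        = (f - augZ F f • 1) + (g - augZ F g • 1) := by abel
      _ = _ := by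
        rw [hf, hg, ← Finset.sum_add_distrib]
        exact Finset.sum_congr rfl (fun i _ => by rw [map_add, add_mul])
  | smul z f hf =>
    rw [map_smul, smul_assoc, ← smul_sub, hf, Finset.smul_sum]
    exact Finset.sum_congr rfl (fun i _ => by rw [AddMonoidHom.map_zsmul, smul_mul_assoc])
end

section
/- Let A and B be finitely generated groups. Then the conjugacy length function of the wreath product A ≀ B is bounded below by the conjugacy length function of B: CLF_{A≀B}(n) ≥ CLF_B(n) for all n. -/
/-- The conjugacy length function of a group w.r.t. a generating set `S`:
the maximum over conjugate pairs `u, v` with `|u| + |v| ≤ n` of the minimal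
word length of a conjugator. -/
noncomputable def CLF {G : Type*} [Group G] (S : Set G) (n : ℕ) : ℕ :=
  sSup {m | ∃ u v : G, (∃ γ : G, γ⁻¹ * u * γ = v) ∧
    wordLength S u + wordLength S v ≤ n ∧
    m = sInf {k | ∃ γ : G, γ⁻¹ * u * γ = v ∧ wordLength S γ = k}}

lemma wordLength_le_length {G : Type*} [Group G] {S : Set G} {l : List G}
    (hl : ∀ x ∈ l, x ∈ S ∨ x⁻¹ ∈ S) : wordLength S l.prod ≤ l.length :=
  Nat.sInf_le ⟨l, hl, rfl, rfl⟩

lemma exists_word_attained {G : Type*} [Group G] {S : Set G} {g : G}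
    (h : ∃ l : List G, (∀ x ∈ l, x ∈ S ∨ x⁻¹ ∈ S) ∧ l.prod = g) :
    ∃ l : List G, (∀ x ∈ l, x ∈ S ∨ x⁻¹ ∈ S) ∧ l.prod = g ∧ l.length = wordLength S g := by
  obtain ⟨l, hl, hp⟩ := h
  exact Nat.sInf_mem (⟨l.length, l, hl, hp, rfl⟩ :
    {n | ∃ l : List G, (∀ x ∈ l, x ∈ S ∨ x⁻¹ ∈ S) ∧ l.prod = g ∧ l.length = n}.Nonempty)

lemma map_word {G H : Type*} [Group G] [Group H] {S : Set G} {S' : Set H} (φ : G →* H)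
    (hφ : ∀ x : G, (x ∈ S ∨ x⁻¹ ∈ S) → (φ x ∈ S' ∨ (φ x)⁻¹ ∈ S' ∨ φ x = 1)) :
    ∀ l : List G, (∀ x ∈ l, x ∈ S ∨ x⁻¹ ∈ S) →
      ∃ l' : List H, (∀ y ∈ l', y ∈ S' ∨ y⁻¹ ∈ S') ∧ l'.prod = φ l.prod ∧ l'.length ≤ l.length := by
  intro l
  induction l with
  | nil => intro _; exact ⟨[], by simp, by simp, by simp⟩
  | cons x xs ih =>
    intro h
    obtain ⟨l', hl', hp', hlen'⟩ := ih (fun y hy => h y (List.mem_cons_of_mem _ hy))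
    rcases hφ x (h x List.mem_cons_self) with hx | hx | hx
    · refine ⟨φ x :: l', ?_, by simp [hp'], by simpa using Nat.succ_le_succ hlen'⟩
      intro y hy
      rcases List.mem_cons.mp hy with rfl | hy
      · exact Or.inl hx
      · exact hl' y hy
    · refine ⟨φ x :: l', ?_, by simp [hp'], by simpa using Nat.succ_le_succ hlen'⟩
      intro y hy
      rcases List.mem_cons.mp hy with rfl | hy
      · exact Or.inr hx
      · exact hl' y hy
    · exact ⟨l', hl', by simp [hp', hx], by simp; omega⟩

lemma wordLength_map_le {G H : Type*} [Group G] [Group H] {S : Set G} {S' : Set H}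
    (φ : G →* H) (hφ : ∀ x : G, (x ∈ S ∨ x⁻¹ ∈ S) → (φ x ∈ S' ∨ (φ x)⁻¹ ∈ S' ∨ φ x = 1))
    {g : G} (hg : ∃ l : List G, (∀ x ∈ l, x ∈ S ∨ x⁻¹ ∈ S) ∧ l.prod = g) :
    wordLength S' (φ g) ≤ wordLength S g := by
  obtain ⟨l, hl, hp, hlen⟩ := exists_word_attained hg
  obtain ⟨l', hl', hp', hlen'⟩ := map_word φ hφ l hl
  calc wordLength S' (φ g) = wordLength S' l'.prod := by rw [hp', hp]
    _ ≤ l'.length := wordLength_le_length hl'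
    _ ≤ l.length := hlen'
    _ = wordLength S g := hlen

lemma exists_word_of_mem_closure {G : Type*} [Group G] {S : Set G} {g : G}
    (hg : g ∈ Subgroup.closure S) :
    ∃ l : List G, (∀ x ∈ l, x ∈ S ∨ x⁻¹ ∈ S) ∧ l.prod = g := by
  have : g ∈ Submonoid.closure (S ∪ S⁻¹) := by
    rw [← Subgroup.closure_toSubmonoid] at *; exact hg
  obtain ⟨l, hl, hp⟩ := Submonoid.exists_list_of_mem_closure this
  refine ⟨l, fun x hx => ?_, hp⟩
  rcases hl x hx with h | h
  · exact Or.inl h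
  · exact Or.inr h

lemma ball_finite {G : Type*} [Group G] {S : Set G} (hS : S.Finite)
    (hgen : ∀ g : G, ∃ l : List G, (∀ x ∈ l, x ∈ S ∨ x⁻¹ ∈ S) ∧ l.prod = g) (n : ℕ) :
    {g : G | wordLength S g ≤ n}.Finite := by
  set s : Set G := S ∪ S⁻¹ with hs
  have hsfin : s.Finite := hS.union hS.inv
  have : Finite ↥s := hsfin.to_subtype
  have hlfin : {l : List ↥s | l.length ≤ n}.Finite := List.finite_length_le ↥s n
  have himg : {g : G | wordLength S g ≤ n} ⊆
      (fun l : List ↥s => (l.map Subtype.val).prod) '' {l : List ↥s | l.length ≤ n} := by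
    intro g hg
    obtain ⟨l, hl, hp, hlen⟩ := exists_word_attained (hgen g)
    have hmem : ∀ x ∈ l, x ∈ s := by
      intro x hx
      rcases hl x hx with h | h
      · exact Or.inl h
      · exact Or.inr h
    refine ⟨l.pmap Subtype.mk hmem, ?_, ?_⟩
    · simpa [Set.mem_setOf_eq, List.length_pmap] using hlen.le.trans hg
    · simp only [List.map_pmap]
      rw [List.pmap_eq_map]
      simpa using hp
  exact (hlfin.image _).subset himg

/-- `CLF_{A≀B}(n) ≥ CLF_B(n)` for all `n`, where the restricted
wreath product `A ≀ B` is realized as the subgroup generated by the standard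
generating set `{(1,s), (f_t,e_B)}`. -/
theorem CLF_wreath_lower_bound_by_base {A B : Type*} [Group A] [Group B]
    (T : Finset A) (X : Finset B)
    (hT : Subgroup.closure (T : Set A) = ⊤) (hX : Subgroup.closure (X : Set B) = ⊤) :
    ∀ n : ℕ,
      CLF (↑X : Set B) n ≤
        CLF {g : ↥(Subgroup.closure (wreathGens T X)) |
          (g : WreathProduct A B) ∈ wreathGens T X} n := by
  intro n
  classical
  set W := WreathProduct A B with hW
  set H : Subgroup W := Subgroup.closure (wreathGens T X) with hH
  set S : Set ↥H := {g : ↥H | (g : W) ∈ wreathGens T X} with hS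
  -- inr lands in H
  have hmem : ∀ b : B, (SemidirectProduct.inr b : W) ∈ H := by
    intro b
    have hb : b ∈ Subgroup.closure (X : Set B) := by rw [hX]; trivial
    have h1 : (Subgroup.closure (X : Set B)).map
        (SemidirectProduct.inr : B →* W) ≤ H := by
      rw [MonoidHom.map_closure]
      apply Subgroup.closure_mono
      rintro y ⟨x, hx, rfl⟩
      exact Or.inl ⟨x, hx, rfl⟩
    exact h1 ⟨b, hb, rfl⟩
  set ι : B →* ↥H :=
    (SemidirectProduct.inr : B →* W).codRestrict H hmem with hι
  set π : ↥H →* B := SemidirectProduct.rightHom.comp H.subtype with hπ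
  have hπι : ∀ b : B, π (ι b) = b := fun b => rfl
  -- generator conditions
  have hι_gen : ∀ x : B, (x ∈ (X : Set B) ∨ x⁻¹ ∈ (X : Set B)) →
      (ι x ∈ S ∨ (ι x)⁻¹ ∈ S ∨ ι x = 1) := by
    intro x hx
    rcases hx with hx | hx
    · exact Or.inl (Or.inl ⟨x, hx, rfl⟩)
    · refine Or.inr (Or.inl ?_)
      show (((ι x)⁻¹ : ↥H) : W) ∈ wreathGens T X
      have : ((ι x)⁻¹ : ↥H) = ι x⁻¹ := by rw [← map_inv]
      rw [this]
      exact Or.inl ⟨x⁻¹, hx, rfl⟩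
  have hproj : ∀ w : W, w ∈ wreathGens T X → (w.right ∈ (X : Set B) ∨ w.right = 1) := by
    rintro w (⟨s, hs, rfl⟩ | ⟨t, ht, rfl⟩)
    · exact Or.inl hs
    · exact Or.inr rfl
  have hπ_gen : ∀ g : ↥H, (g ∈ S ∨ g⁻¹ ∈ S) →
      (π g ∈ (X : Set B) ∨ (π g)⁻¹ ∈ (X : Set B) ∨ π g = 1) := by
    intro g hg
    rcases hg with hg | hg
    · rcases hproj _ hg with h | h
      · exact Or.inl h
      · exact Or.inr (Or.inr h)
    · rcases hproj _ hg with h | h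
      · refine Or.inr (Or.inl ?_)
        have : ((g⁻¹ : ↥H) : W).right = (π g)⁻¹ := rfl
        rwa [this] at h
      · refine Or.inr (Or.inr ?_)
        have : ((g⁻¹ : ↥H) : W).right = (π g)⁻¹ := rfl
        rw [this] at h
        exact inv_eq_one.mp h
  -- existence of words
  have hBword : ∀ b : B, ∃ l : List B,
      (∀ x ∈ l, x ∈ (X : Set B) ∨ x⁻¹ ∈ (X : Set B)) ∧ l.prod = b := by
    intro b
    exact exists_word_of_mem_closure (by rw [hX]; trivial)
  have hGword : ∀ g : ↥H, ∃ l : List ↥H,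
      (∀ x ∈ l, x ∈ S ∨ x⁻¹ ∈ S) ∧ l.prod = g := by
    intro g
    obtain ⟨l, hl, hp⟩ := exists_word_of_mem_closure g.2
    clear hp
    have key : ∀ l : List W, (∀ x ∈ l, x ∈ wreathGens T X ∨ x⁻¹ ∈ wreathGens T X) →
        ∃ l' : List ↥H, (∀ x ∈ l', x ∈ S ∨ x⁻¹ ∈ S) ∧ ((l'.prod : ↥H) : W) = l.prod ∧
          l'.length = l.length := by
      intro l
      induction l with
      | nil => intro _; exact ⟨[], by simp, by simp, by simp⟩
      | cons x xs ih =>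
        intro h
        obtain ⟨l', hl', hp', hlen'⟩ := ih (fun y hy => h y (List.mem_cons_of_mem _ hy))
        have hxg := h x List.mem_cons_self
        have hxH : x ∈ H := by
          rcases hxg with hx | hx
          · exact Subgroup.subset_closure hx
          · exact H.inv_mem_iff.mp (Subgroup.subset_closure hx)
        have hSm : (⟨x, hxH⟩ : ↥H) ∈ S ∨ (⟨x, hxH⟩ : ↥H)⁻¹ ∈ S := by
          rcases hxg with hx | hx
          · exact Or.inl hx
          · exact Or.inr hx
        refine ⟨⟨x, hxH⟩ :: l', ?_, ?_, by simpa using hlen'⟩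
        · intro y hy
          rcases List.mem_cons.mp hy with rfl | hy
          · exact hSm
          · exact hl' y hy
        · show (((⟨x, hxH⟩ : ↥H) :: l').prod : W) = (x :: xs).prod
          rw [List.prod_cons, List.prod_cons, Subgroup.coe_mul, hp']
    obtain ⟨lw, hlw, hpw⟩ := exists_word_of_mem_closure g.2
    obtain ⟨l', hl', hp', _⟩ := key lw hlw
    exact ⟨l', hl', Subtype.ext (hp'.trans hpw)⟩
  have hwl_ι : ∀ b : B, wordLength S (ι b) ≤ wordLength (↑X : Set B) b :=
    fun b => wordLength_map_le ι hι_gen (hBword b)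
  have hwl_π : ∀ g : ↥H, wordLength (↑X : Set B) (π g) ≤ wordLength S g :=
    fun g => wordLength_map_le π hπ_gen (hGword g)
  -- the two CLF sets
  set SB : Set ℕ := {m | ∃ u v : B, (∃ γ : B, γ⁻¹ * u * γ = v) ∧
    wordLength (↑X : Set B) u + wordLength (↑X : Set B) v ≤ n ∧
    m = sInf {k | ∃ γ : B, γ⁻¹ * u * γ = v ∧ wordLength (↑X : Set B) γ = k}} with hSB
  set SW : Set ℕ := {m | ∃ u v : ↥H, (∃ γ : ↥H, γ⁻¹ * u * γ = v) ∧
    wordLength S u + wordLength S v ≤ n ∧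
    m = sInf {k | ∃ γ : ↥H, γ⁻¹ * u * γ = v ∧ wordLength S γ = k}} with hSW
  have hsub : SB ⊆ SW := by
    rintro m ⟨u, v, ⟨γ, hγ⟩, hlen, rfl⟩
    have hconjι : (ι γ)⁻¹ * ι u * ι γ = ι v := by
      rw [← map_inv, ← map_mul, ← map_mul, hγ]
    refine ⟨ι u, ι v, ⟨ι γ, hconjι⟩, ?_, ?_⟩
    · exact le_trans (add_le_add (hwl_ι u) (hwl_ι v)) hlen
    · set KB : Set ℕ := {k | ∃ δ : B, δ⁻¹ * u * δ = v ∧ wordLength (↑X : Set B) δ = k} with hKB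
      set KW : Set ℕ := {k | ∃ δ : ↥H, δ⁻¹ * ι u * δ = ι v ∧ wordLength S δ = k} with hKW
      have hKBne : KB.Nonempty := ⟨_, γ, hγ, rfl⟩
      have hKWne : KW.Nonempty := ⟨_, ι γ, hconjι, rfl⟩
      have le1 : sInf KB ≤ sInf KW := by
        obtain ⟨δ, hδ, hδk⟩ := Nat.sInf_mem hKWne
        have hc : (π δ)⁻¹ * u * π δ = v := by
          have := congrArg π hδ
          rw [map_mul, map_mul, map_inv, hπι, hπι] at this
          exact this
        calc sInf KB ≤ wordLength (↑X : Set B) (π δ) := Nat.sInf_le ⟨π δ, hc, rfl⟩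
          _ ≤ wordLength S δ := hwl_π δ
          _ = sInf KW := hδk
      have le2 : sInf KW ≤ sInf KB := by
        obtain ⟨δ, hδ, hδk⟩ := Nat.sInf_mem hKBne
        have hc : (ι δ)⁻¹ * ι u * ι δ = ι v := by
          rw [← map_inv, ← map_mul, ← map_mul, hδ]
        calc sInf KW ≤ wordLength S (ι δ) := Nat.sInf_le ⟨ι δ, hc, rfl⟩
          _ ≤ wordLength (↑X : Set B) δ := hwl_ι δ
          _ = sInf KB := hδk
      exact le_antisymm le1 le2
  -- boundedness of SW
  have hWgfin : (wreathGens T X).Finite := by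
    have h1 : wreathGens T X ⊆
        ((fun s : B => (⟨1, s⟩ : W)) '' ↑X) ∪ ((fun t : A => (⟨lampF t, 1⟩ : W)) '' ↑T) := by
      rintro w (⟨s, hs, rfl⟩ | ⟨t, ht, rfl⟩)
      · exact Or.inl ⟨s, hs, rfl⟩
      · exact Or.inr ⟨t, ht, rfl⟩
    exact ((X.finite_toSet.image _).union (T.finite_toSet.image _)).subset h1
  have hSfin : S.Finite := by
    have : S = (Subtype.val : ↥H → W) ⁻¹' (wreathGens T X) := rfl
    rw [this]
    exact hWgfin.preimage (Subtype.val_injective.injOn)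
  have hballfin := ball_finite hSfin hGword n
  have hbdd : BddAbove SW := by
    have hsub2 : SW ⊆ (fun p : ↥H × ↥H =>
        sInf {k | ∃ δ : ↥H, δ⁻¹ * p.1 * δ = p.2 ∧ wordLength S δ = k}) ''
        ({g : ↥H | wordLength S g ≤ n} ×ˢ {g : ↥H | wordLength S g ≤ n}) := by
      rintro m ⟨u, v, hc, hlen, rfl⟩
      exact ⟨(u, v), ⟨le_trans (Nat.le_add_right _ _) hlen,
        le_trans (Nat.le_add_left _ _) hlen⟩, rfl⟩
    exact (((hballfin.prod hballfin).image _).subset hsub2).bddAbove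
  -- conclude
  show sSup SB ≤ sSup SW
  rcases SB.eq_empty_or_nonempty with he | hne
  · rw [he, csSup_empty]
    exact bot_le
  · exact csSup_le_csSup hbdd hne hsub
end

section
/- Let A, B be groups, b ∈ B of infinite order, and t ∈ B. Define, for a finitely supported f: B → A, the element π_t(f) = Π_{j=-∞}^{∞} f(b^j t) (ordered with f(b^j t) to the left of f(b^{j-1} t); this is a finite product since f has finite support). If (f,b) and (g,c) are conjugate in A ≀ B via (h,z), i.e. (f,b)(h,z)=(h,z)(g,c), then for every t ∈ B, π_t(f) = π_t^{(z)}(g), where π_t^{(z)}(g) = Π_{j=-∞}^{∞} g(z^{-1}b^j t). -/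
/-- suppose `b` has infinite order and `(f,b)(h,z) = (h,z)(g,c)` in
`A ≀ B` with `f, g, h` finitely supported. Then for every `t ∈ B` the bi-infinite
ordered products `π_t(f) = Π_j f(b^j t)` and `π_t^{(z)}(g) = Π_j g(z⁻¹ b^j t)`
agree: for every `m` whose window `[-m,m]` contains all nontrivial factors, the
truncated ordered products (factors with larger `j` to the left) coincide. -/
theorem wreath_conjugation_pi_invariant {A B : Type*} [Group A] [Group B]
    (f g h : B → A) (b c z : B) (hb : ¬ IsOfFinOrder b)
    (hf : (Function.mulSupport f).Finite) (hg : (Function.mulSupport g).Finite)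
    (hh : (Function.mulSupport h).Finite)
    (hconj : (⟨f, b⟩ * ⟨h, z⟩ : WreathProduct A B) = ⟨h, z⟩ * ⟨g, c⟩) :
    ∀ t : B, ∀ m : ℕ,
      (∀ j : ℤ, (m : ℤ) < |j| → f (b ^ j * t) = 1 ∧ g (z⁻¹ * b ^ j * t) = 1) →
      ((List.range (2 * m + 1)).map fun i => f (b ^ ((m : ℤ) - i) * t)).prod =
        ((List.range (2 * m + 1)).map fun i => g (z⁻¹ * b ^ ((m : ℤ) - i) * t)).prod := by
  intro t m hvan
  -- pointwise conjugation relation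
  have hleft : ∀ x : B, f x * h (b⁻¹ * x) = h x * g (z⁻¹ * x) := by
    intro x
    have := congrArg SemidirectProduct.left hconj
    simp only [SemidirectProduct.mul_left] at this
    exact congrFun this x
  have rel : ∀ j : ℤ, f (b ^ j * t) * h (b ^ (j-1) * t)
      = h (b ^ j * t) * g (z⁻¹ * b ^ j * t) := by
    intro j
    have h1 : b⁻¹ * (b ^ j * t) = b ^ (j-1) * t := by
      rw [← mul_assoc, zpow_sub_one]; group
    have := hleft (b ^ j * t)
    rw [h1, ← mul_assoc] at this
    exact this
  -- injectivity of j ↦ b^j * t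
  have inj : Function.Injective (fun j : ℤ => b ^ j * t) := by
    intro i j hij
    exact injective_zpow_iff_not_isOfFinOrder.mpr hb (mul_right_cancel hij)
  have Sfin : {j : ℤ | h (b ^ j * t) ≠ 1}.Finite := by
    have : {j : ℤ | h (b ^ j * t) ≠ 1} = (fun j : ℤ => b ^ j * t) ⁻¹' Function.mulSupport h := rfl
    rw [this]
    exact Set.Finite.preimage inj.injOn hh
  -- constancy of H above m
  have Hup : ∀ j : ℤ, (m:ℤ) ≤ j → h (b ^ j * t) = h (b ^ (m:ℤ) * t) := by
    intro j hj
    refine Int.le_induction (motive := fun j _ => h (b ^ j * t) = h (b ^ (m:ℤ) * t)) rfl (fun n hn ih => ?_) j hj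
    have habs : (m:ℤ) < |n + 1| := by
      have : (0:ℤ) ≤ m := Int.natCast_nonneg m
      rw [abs_of_nonneg (by omega)]; omega
    have hr := rel (n + 1)
    rw [(hvan _ habs).1, (hvan _ habs).2, one_mul, mul_one] at hr
    rw [show (n:ℤ) + 1 - 1 = n by ring] at hr
    exact hr.symm.trans ih
  have Hdown : ∀ j : ℤ, j ≤ -(m:ℤ) - 1 → h (b ^ j * t) = h (b ^ (-(m:ℤ)-1) * t) := by
    intro j hj
    refine Int.le_induction_down (motive := fun j _ => h (b ^ j * t) = h (b ^ (-(m:ℤ)-1) * t)) rfl (fun n hn ih => ?_) j hj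
    have habs : (m:ℤ) < |n| := by
      have : (0:ℤ) ≤ m := Int.natCast_nonneg m
      rw [abs_of_nonpos (by omega)]; omega
    have hr := rel n
    rw [(hvan _ habs).1, (hvan _ habs).2, one_mul, mul_one] at hr
    exact hr.trans ih
  -- vanishing of H at the endpoints
  have Hm1 : h (b ^ (m:ℤ) * t) = 1 := by
    obtain ⟨N, hN⟩ := Sfin.bddAbove
    have hout : max N (m:ℤ) + 1 ∉ {j : ℤ | h (b ^ j * t) ≠ 1} := by
      intro hmem
      have := hN hmem
      omega
    have h1 : h (b ^ (max N (m:ℤ) + 1) * t) = 1 := not_not.mp hout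
    rw [← Hup (max N (m:ℤ) + 1) (by omega)]
    exact h1
  have Hlo1 : h (b ^ (-(m:ℤ)-1) * t) = 1 := by
    obtain ⟨N, hN⟩ := Sfin.bddBelow
    have hout : min N (-(m:ℤ)-1) - 1 ∉ {j : ℤ | h (b ^ j * t) ≠ 1} := by
      intro hmem
      have := hN hmem
      omega
    have h1 : h (b ^ (min N (-(m:ℤ)-1) - 1) * t) = 1 := not_not.mp hout
    rw [← Hdown (min N (-(m:ℤ)-1) - 1) (by omega)]
    exact h1
  -- the telescoping identity
  have aux : ∀ n : ℕ,
      ((List.range n).map fun i => f (b ^ ((m : ℤ) - i) * t)).prod * h (b ^ ((m:ℤ) - n) * t)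
      = h (b ^ (m:ℤ) * t) * ((List.range n).map fun i => g (z⁻¹ * b ^ ((m : ℤ) - i) * t)).prod := by
    intro n
    induction n with
    | zero => simp
    | succ n ih =>
      simp only [List.range_succ, List.pure_def, List.bind_eq_flatMap, List.flatMap_append,
        List.flatMap_singleton, List.map_append, List.map_cons, List.map_nil, List.prod_append,
        List.prod_cons, List.prod_nil, mul_one] at ih ⊢
      have hcast : (m:ℤ) - (n+1:ℕ) = ((m:ℤ) - n) - 1 := by push_cast; ring
      rw [hcast, mul_assoc, rel ((m:ℤ) - n), ← mul_assoc, ih, mul_assoc]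
  have := aux (2 * m + 1)
  have hcast : (m:ℤ) - ((2*m+1 : ℕ) : ℤ) = -(m:ℤ) - 1 := by push_cast; ring
  rw [hcast, Hlo1, Hm1, mul_one, one_mul] at this
  exact this
end

section
/- Let A, B be groups and b ∈ B of infinite order. Suppose (f,b) ∈ A ≀ B satisfies: for every right coset representative t of ⟨b⟩ in B, the ordered product π_t(f) = Π_j f(b^j t) equals the identity of A. Define h: B → A by h(b^k t) = Π_{j≤k} f(b^j t) (on each coset, using a fixed set of coset representatives). Then h is finitely supported and (f,b)(h,e_B) = (h,e_B)(1,b), i.e. (f,b) is conjugate to (1,b) in A ≀ B. -/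
/-- let `b ∈ B` have infinite order, fix right-coset
representatives `rep` for `⟨b⟩` in `B` (so `x = b^(kfun x) · rep x`), and let
`f : B → A` be finitely supported with all factors outside the window
`[-M, M]` trivial on each coset. If every ordered product
`π_t(f) = Π_j f(b^j t)` is trivial, then the function
`h(b^k t) = Π_{j ≤ k} f(b^j t)` is finitely supported and
`(f,b)(h,e_B) = (h,e_B)(1,b)`, i.e. `(f,b)` is conjugate to `(1,b)`. -/
theorem wreath_conjugate_to_base {A B : Type*} [Group A] [Group B]
    (b : B) (hb : ¬ IsOfFinOrder b)
    (rep : B → B) (kfun : B → ℤ)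
    (hrep : ∀ (x : B) (k : ℤ), rep (b ^ k * x) = rep x)
    (hk : ∀ x : B, x = b ^ kfun x * rep x)
    (f : B → A) (hf : (Function.mulSupport f).Finite)
    (M : ℕ) (hM : ∀ (x : B) (j : ℤ), (M : ℤ) < |j| → f (b ^ j * rep x) = 1)
    (hpi : ∀ x : B,
      ((List.range (2 * M + 1)).map fun i => f (b ^ ((M : ℤ) - i) * rep x)).prod = 1)
    (h : B → A)
    (hdef : ∀ x : B, h x =
      ((List.range (kfun x + M + 1).toNat).map fun i => f (b ^ (kfun x - i) * rep x)).prod) :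
    (Function.mulSupport h).Finite ∧
      (⟨f, b⟩ * ⟨h, 1⟩ : WreathProduct A B) = ⟨h, 1⟩ * ⟨(1 : B → A), b⟩ := by
  have hdo : ∀ n : ℕ, (do let a ← List.range n; pure ((a:ℤ))) =
      (List.range n).map (fun a : ℕ => (a:ℤ)) := fun n => List.flatMap_pure_eq_map _ _
  have hdef' : ∀ x : B, h x = ((List.range (kfun x + M + 1).toNat).map
      fun i : ℕ => f (b ^ (kfun x - (i:ℤ)) * rep x)).prod := by
    intro x; rw [hdef x, hdo, List.map_map]; rfl
  have hpi' : ∀ x : B, ((List.range (2 * M + 1)).map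
      fun i : ℕ => f (b ^ ((M:ℤ) - (i:ℤ)) * rep x)).prod = 1 := by
    intro x
    have := hpi x
    rw [hdo, List.map_map] at this
    exact this
  have hzinj : Function.Injective fun n : ℤ => b ^ n :=
    injective_zpow_iff_not_isOfFinOrder.mpr hb
  have hkfun : ∀ (x : B) (m : ℤ), kfun (b ^ m * x) = m + kfun x := by
    intro x m
    have h1 := hk (b ^ m * x)
    rw [hrep] at h1
    have h2 : b ^ (m + kfun x) * rep x = b ^ (kfun (b ^ m * x)) * rep x := by
      rw [zpow_add, mul_assoc, ← hk x]; exact h1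
    exact (hzinj (mul_right_cancel h2)).symm
  -- h vanishes when kfun x < -M
  have hsmall : ∀ x : B, kfun x < -(M : ℤ) → h x = 1 := by
    intro x hx
    rw [hdef' x, show (kfun x + M + 1).toNat = 0 by omega]
    simp
  -- h vanishes when kfun x > M
  have hbig : ∀ x : B, (M : ℤ) < kfun x → h x = 1 := by
    intro x hx
    rw [hdef' x, show (kfun x + M + 1).toNat = (kfun x - M).toNat + (2 * M + 1) by omega,
      List.range_add, List.map_append, List.prod_append]
    have h1 : ((List.range (kfun x - M).toNat).map
        fun i : ℕ => f (b ^ (kfun x - (i:ℤ)) * rep x)).prod = 1 := by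
      apply List.prod_eq_one
      intro a ha
      obtain ⟨i, hi, rfl⟩ := List.mem_map.mp ha
      rw [List.mem_range] at hi
      apply hM
      have : (M : ℤ) < kfun x - i := by omega
      exact lt_of_lt_of_le this (le_abs_self _)
    have h2 : (((List.range (2 * M + 1)).map fun i => (kfun x - M).toNat + i).map
        fun i : ℕ => f (b ^ (kfun x - (i:ℤ)) * rep x)).prod = 1 := by
      rw [List.map_map]
      have : ((fun i : ℕ => f (b ^ (kfun x - (i:ℤ)) * rep x)) ∘
          fun i => (kfun x - M).toNat + i) =
          fun i : ℕ => f (b ^ ((M : ℤ) - (i:ℤ)) * rep x) := by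
        funext i
        simp only [Function.comp]
        have he : (kfun x - ((kfun x - M).toNat + i : ℕ) : ℤ) = (M : ℤ) - (i:ℤ) := by
          push_cast
          omega
        rw [he]
      rw [this]
      exact hpi' x
    rw [h1, h2, one_mul]
  -- the key pointwise identity
  have key : ∀ x : B, f x * h (b⁻¹ * x) = h x := by
    intro x
    have hrep' : rep (b⁻¹ * x) = rep x := by
      have := hrep x (-1); rwa [zpow_neg_one] at this
    have hk' : kfun (b⁻¹ * x) = -1 + kfun x := by
      have := hkfun x (-1); rwa [zpow_neg_one] at this
    by_cases hc : 0 ≤ kfun x + M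
    · rw [hdef' x, hdef' (b⁻¹ * x), hrep', hk',
        show (kfun x + M + 1).toNat = ((-1 + kfun x) + M + 1).toNat + 1 by omega,
        List.range_succ_eq_map, List.map_cons, List.prod_cons, List.map_map]
      congr 1
      · norm_num
        conv_lhs => rw [hk x]
      · have he : (fun i : ℕ => f (b ^ (-1 + kfun x - (i:ℤ)) * rep x)) =
            ((fun i : ℕ => f (b ^ (kfun x - (i:ℤ)) * rep x)) ∘ Nat.succ) := by
          funext i
          simp only [Function.comp, Nat.succ_eq_add_one]
          have he2 : (-1 + kfun x - (i:ℤ)) = kfun x - ((i+1 : ℕ) : ℤ) := by push_cast; ring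
          rw [he2]
        rw [he]
    · have h1 : h x = 1 := hsmall x (by omega)
      have h2 : h (b⁻¹ * x) = 1 := by
        rw [hdef' (b⁻¹ * x), hk', show ((-1 + kfun x) + M + 1).toNat = 0 by omega]
        simp
      have h3 : f x = 1 := by
        rw [hk x]
        apply hM
        rw [abs_of_nonpos (by omega)]
        omega
      rw [h1, h2, h3, one_mul]
  constructor
  · apply Set.Finite.subset
      (((Set.finite_Icc (-(2 * M : ℤ)) (2 * M)).prod hf).image fun p : ℤ × B => b ^ p.1 * p.2)
    intro x hx
    have hxne : h x ≠ 1 := hx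
    have hkM : |kfun x| ≤ (M : ℤ) := by
      by_contra hK
      push_neg at hK
      rcases lt_abs.mp hK with h1 | h1
      · exact hxne (hbig x h1)
      · exact hxne (hsmall x (by omega))
    rw [hdef' x] at hxne
    have hex : ∃ i ∈ List.range (kfun x + M + 1).toNat,
        f (b ^ (kfun x - (i:ℤ)) * rep x) ≠ 1 := by
      by_contra hcon
      push_neg at hcon
      apply hxne
      apply List.prod_eq_one
      intro a ha
      obtain ⟨i, hi, rfl⟩ := List.mem_map.mp ha
      exact hcon i hi
    obtain ⟨i, hi, hfi⟩ := hex
    rw [List.mem_range] at hi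
    rw [abs_le] at hkM
    refine ⟨((i : ℤ), b ^ (kfun x - (i:ℤ)) * rep x), ⟨?_, hfi⟩, ?_⟩
    · rw [Set.mem_Icc]
      constructor <;> omega
    · show b ^ (i : ℤ) * (b ^ (kfun x - (i:ℤ)) * rep x) = x
      rw [← mul_assoc, ← zpow_add, show (i : ℤ) + (kfun x - i) = kfun x by ring, ← hk x]
  · ext
    · show f _ * h (b⁻¹ * _) = h _ * _
      rw [key]
      show h _ = h _ * (1 : A)
      rw [mul_one]
    · show b * 1 = 1 * b
      rw [mul_one, one_mul]
end

section
/- Every cyclic subgroup of a free solvable group S_{r,d} (r, d ≥ 1) is undistorted. More precisely, for every nontrivial x ∈ S_{r,d} and every integer k, d_{S_{r,d}}(1, x^k) ≥ |k|/2, so the distortion function satisfies δ^{S_{r,d}}_{⟨x⟩}(n) ≤ 2n. -/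
instance (r d : ℕ) : (derivedSeries (FreeGroup (Fin r)) d).Normal :=
  derivedSeries_normal _ _

/-- The free solvable group of rank `r` and derived length `d`. -/
abbrev FreeSolvable (r d : ℕ) := FreeGroup (Fin r) ⧸ derivedSeries (FreeGroup (Fin r)) d

namespace MagnusAux

variable {r : ℕ} (N : Subgroup (FreeGroup (Fin r))) [N.Normal]

abbrev V := (Fin r × (FreeGroup (Fin r) ⧸ N)) →₀ ℤ

/-- translation of the second coordinate -/
def shift (q : FreeGroup (Fin r) ⧸ N) : V N ≃+ V N :=
  Finsupp.domCongr (Equiv.prodCongr (Equiv.refl _) (Equiv.mulLeft q))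

lemma shift_single (q p : FreeGroup (Fin r) ⧸ N) (i : Fin r) (z : ℤ) :
    shift N q (Finsupp.single (i, p) z) = Finsupp.single (i, q * p) z := by
  simp [shift, Finsupp.domCongr_apply, Finsupp.equivMapDomain_single]

lemma shift_apply (q : FreeGroup (Fin r) ⧸ N) (f : V N) (a : Fin r × (FreeGroup (Fin r) ⧸ N)) :
    shift N q f a = f (a.1, q⁻¹ * a.2) := by
  cases a with
  | mk i p => simp [shift, Finsupp.domCongr_apply, Finsupp.equivMapDomain_apply]

lemma shift_one (f : V N) : shift N 1 f = f := by
  ext a; simp [shift_apply]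

lemma shift_shift (q₁ q₂ : FreeGroup (Fin r) ⧸ N) (f : V N) :
    shift N q₁ (shift N q₂ f) = shift N (q₁ * q₂) f := by
  ext a; simp [shift_apply, mul_assoc]

/-- The action of the quotient on the module, as `MulAut` of the multiplicative group. -/
noncomputable def phi : (FreeGroup (Fin r) ⧸ N) →* MulAut (Multiplicative (V N)) where
  toFun q := AddEquiv.toMultiplicative (shift N q)
  map_one' := by
    ext f : 1
    exact congrArg Multiplicative.ofAdd (shift_one N _)
  map_mul' q₁ q₂ := by
    ext f : 1
    exact congrArg Multiplicative.ofAdd (shift_shift N q₁ q₂ _).symm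

lemma phi_apply (q : FreeGroup (Fin r) ⧸ N) (v : Multiplicative (V N)) :
    Multiplicative.toAdd (phi N q v) = shift N q (Multiplicative.toAdd v) := rfl

/-- The Magnus homomorphism. -/
noncomputable def mu : FreeGroup (Fin r) →* Multiplicative (V N) ⋊[phi N] (FreeGroup (Fin r) ⧸ N) :=
  FreeGroup.lift fun i =>
    ⟨Multiplicative.ofAdd (Finsupp.single (i, 1) 1), QuotientGroup.mk (FreeGroup.of i)⟩

lemma mu_right (w : FreeGroup (Fin r)) : (mu N w).right = QuotientGroup.mk w := by
  have : SemidirectProduct.rightHom.comp (mu N) = QuotientGroup.mk' N :=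
    FreeGroup.ext_hom _ _ (by intro a; simp [mu])
  exact congrArg (fun (f : FreeGroup (Fin r) →* FreeGroup (Fin r) ⧸ N) => f w) this

/-- The Fox derivative vector. -/
noncomputable def Dv (w : FreeGroup (Fin r)) : V N := Multiplicative.toAdd (mu N w).left

lemma Dv_one : Dv N 1 = 0 := by simp [Dv]

lemma Dv_of (i : Fin r) : Dv N (FreeGroup.of i) = Finsupp.single (i, 1) 1 := by
  simp [Dv, mu]

lemma Dv_mul (u v : FreeGroup (Fin r)) :
    Dv N (u * v) = Dv N u + shift N (QuotientGroup.mk u) (Dv N v) := by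
  have h := SemidirectProduct.mul_left (mu N u) (mu N v)
  rw [← map_mul] at h
  have := congrArg Multiplicative.toAdd h
  rw [toAdd_mul] at this
  rw [Dv, this, Dv, Dv, mu_right, phi_apply]

lemma Dv_inv (w : FreeGroup (Fin r)) :
    Dv N w⁻¹ = -(shift N (QuotientGroup.mk w)⁻¹ (Dv N w)) := by
  have h0 : Dv N (w⁻¹ * w) = 0 := by rw [inv_mul_cancel, Dv_one]
  rw [Dv_mul] at h0
  have h3 : ((QuotientGroup.mk w⁻¹ : FreeGroup (Fin r) ⧸ N)) = (QuotientGroup.mk w)⁻¹ := by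
    simp
  rw [h3] at h0
  exact eq_neg_of_add_eq_zero_left h0

section Transversal

variable (t : (FreeGroup (Fin r) ⧸ N) → FreeGroup (Fin r))

lemma nmem (ht : ∀ q, (QuotientGroup.mk (t q) : FreeGroup (Fin r) ⧸ N) = q)
    (q : FreeGroup (Fin r) ⧸ N) (w : FreeGroup (Fin r)) :
    t q * w * (t (q * QuotientGroup.mk w))⁻¹ ∈ N := by
  rw [← QuotientGroup.eq_one_iff (t q * w * (t (q * QuotientGroup.mk w))⁻¹)]
  simp only [QuotientGroup.mk_mul, QuotientGroup.mk_inv, ht]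
  group

/-- The Schreier-type generator attached to an "edge". -/
def nElt (ht : ∀ q, (QuotientGroup.mk (t q) : FreeGroup (Fin r) ⧸ N) = q)
    (a : Fin r × (FreeGroup (Fin r) ⧸ N)) : ↥N :=
  ⟨t a.2 * FreeGroup.of a.1 * (t (a.2 * QuotientGroup.mk (FreeGroup.of a.1)))⁻¹,
    nmem N t ht a.2 (FreeGroup.of a.1)⟩

variable (ht : ∀ q, (QuotientGroup.mk (t q) : FreeGroup (Fin r) ⧸ N) = q)

/-- The "Hurewicz inverse". -/
noncomputable def hmap (f : V N) : Abelianization ↥N :=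
  f.prod fun a z => Abelianization.of (nElt N t ht a) ^ z

lemma hmap_zero : hmap N t ht 0 = 1 := by simp [hmap]

lemma hmap_add (f g : V N) : hmap N t ht (f + g) = hmap N t ht f * hmap N t ht g := by
  classical
  exact Finsupp.prod_add_index' (fun a => by simp) (fun a z₁ z₂ => by rw [zpow_add])

lemma hmap_single (a : Fin r × (FreeGroup (Fin r) ⧸ N)) :
    hmap N t ht (Finsupp.single a 1) = Abelianization.of (nElt N t ht a) := by
  classical
  rw [hmap, Finsupp.prod_single_index (by simp)]
  simp

lemma hmap_neg (f : V N) : hmap N t ht (-f) = (hmap N t ht f)⁻¹ := by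
  have h := hmap_add N t ht f (-f)
  rw [add_neg_cancel, hmap_zero] at h
  exact eq_inv_of_mul_eq_one_right h.symm

lemma main_identity (ht1 : t 1 = 1) (w : FreeGroup (Fin r)) :
    ∀ q : FreeGroup (Fin r) ⧸ N,
      hmap N t ht (shift N q (Dv N w)) =
        Abelianization.of ⟨t q * w * (t (q * QuotientGroup.mk w))⁻¹, nmem N t ht q w⟩ := by
  have hp : ∀ i : Fin r, (pure i : FreeGroup (Fin r)) = FreeGroup.of i := fun _ => rfl
  induction w using FreeGroup.induction_on with
  | C1 =>
    intro q
    rw [Dv_one, map_zero, hmap_zero]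
    have he : (⟨t q * 1 * (t (q * QuotientGroup.mk 1))⁻¹, nmem N t ht q 1⟩ : ↥N) = 1 := by
      apply Subtype.ext
      have : (QuotientGroup.mk (1 : FreeGroup (Fin r)) : FreeGroup (Fin r) ⧸ N) = 1 := rfl
      simp [this]
    rw [he, map_one]
  | of i =>
    intro q
    rw [Dv_of, shift_single, mul_one, hmap_single]
    rfl
  | inv_of i _ =>
    intro q
    rw [Dv_inv, map_neg, shift_shift, hmap_neg, Dv_of, shift_single, mul_one, hmap_single]
    set q' : FreeGroup (Fin r) ⧸ N := q * (QuotientGroup.mk (FreeGroup.of i))⁻¹ with hq'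
    have key : (nElt N t ht (i, q')) *
        (⟨t q * (FreeGroup.of i)⁻¹ * (t (q * QuotientGroup.mk (FreeGroup.of i)⁻¹))⁻¹,
          nmem N t ht q (FreeGroup.of i)⁻¹⟩ : ↥N) = 1 := by
      apply Subtype.ext
      show (t q' * FreeGroup.of i * (t (q' * QuotientGroup.mk (FreeGroup.of i)))⁻¹) *
        (t q * (FreeGroup.of i)⁻¹ * (t (q * QuotientGroup.mk (FreeGroup.of i)⁻¹))⁻¹) = 1
      have h1 : q' * QuotientGroup.mk (FreeGroup.of i) = q := by rw [hq']; group
      have h2 : q * (QuotientGroup.mk ((FreeGroup.of i)⁻¹) : FreeGroup (Fin r) ⧸ N) = q' := by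
        rw [hq']; simp
      rw [h1, h2]
      group
    have h3 := congrArg Abelianization.of key
    rw [map_mul, map_one] at h3
    exact (eq_inv_of_mul_eq_one_right h3).symm
  | mul u v hu hv =>
    intro q
    rw [Dv_mul, map_add, hmap_add, shift_shift, hu q, hv (q * QuotientGroup.mk u)]
    rw [← map_mul]
    congr 1
    apply Subtype.ext
    show (t q * u * (t (q * QuotientGroup.mk u))⁻¹) *
      (t (q * QuotientGroup.mk u) * v * (t (q * QuotientGroup.mk u * QuotientGroup.mk v))⁻¹) =
      t q * (u * v) * (t (q * QuotientGroup.mk (u * v)))⁻¹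
    rw [QuotientGroup.mk_mul]
    group

lemma mem_commutator_of_Dv_eq_zero (ht : ∀ q, (QuotientGroup.mk (t q) : FreeGroup (Fin r) ⧸ N) = q) (ht1 : t 1 = 1) (w : FreeGroup (Fin r)) (hw : w ∈ N)
    (h0 : Dv N w = 0) : w ∈ ⁅N, N⁆ := by
  have h := main_identity N t ht ht1 w 1
  rw [h0, map_zero, hmap_zero] at h
  have hmk : (QuotientGroup.mk w : FreeGroup (Fin r) ⧸ N) = 1 :=
    (QuotientGroup.eq_one_iff w).mpr hw
  have helt : (⟨t 1 * w * (t (1 * QuotientGroup.mk w))⁻¹, nmem N t ht 1 w⟩ : ↥N)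
      = ⟨w, hw⟩ := by
    apply Subtype.ext
    simp [hmk, ht1]
  rw [helt] at h
  have hcomm : (⟨w, hw⟩ : ↥N) ∈ commutator ↥N := by
    have := (QuotientGroup.eq_one_iff (⟨w, hw⟩ : ↥N) (N := commutator ↥N)).mp h.symm
    exact this
  have : w ∈ Subgroup.map N.subtype (commutator ↥N) :=
    ⟨⟨w, hw⟩, hcomm, rfl⟩
  rwa [commutator_def, Subgroup.map_commutator, ← MonoidHom.range_eq_map,
    Subgroup.range_subtype] at this

end Transversal

section Norm

/-- The ℓ¹ norm on `V N`. -/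
noncomputable def nu (f : V N) : ℕ := f.sum fun _ z => z.natAbs

lemma nu_eq_sum {f : V N} {s : Finset (Fin r × (FreeGroup (Fin r) ⧸ N))}
    (hs : f.support ⊆ s) : nu N f = ∑ a ∈ s, (f a).natAbs :=
  Finsupp.sum_of_support_subset f hs _ (fun _ _ => rfl)

lemma nu_add_le (f g : V N) : nu N (f + g) ≤ nu N f + nu N g := by
  classical
  rw [nu_eq_sum N (s := f.support ∪ g.support) (Finsupp.support_add),
    nu_eq_sum N (s := f.support ∪ g.support) Finset.subset_union_left,
    nu_eq_sum N (s := f.support ∪ g.support) Finset.subset_union_right,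
    ← Finset.sum_add_distrib]
  exact Finset.sum_le_sum fun a _ => by
    rw [Finsupp.add_apply]; exact Int.natAbs_add_le _ _

lemma nu_neg (f : V N) : nu N (-f) = nu N f := by
  rw [nu_eq_sum N (s := f.support) (by rw [Finsupp.support_neg]),
    nu_eq_sum N (s := f.support) subset_rfl]
  exact Finset.sum_congr rfl fun a _ => by rw [Finsupp.neg_apply, Int.natAbs_neg]

lemma nu_shift (q : FreeGroup (Fin r) ⧸ N) (f : V N) : nu N (shift N q f) = nu N f := by
  classical
  exact Finsupp.sum_equivMapDomain _ f _

lemma nu_single (a : Fin r × (FreeGroup (Fin r) ⧸ N)) : nu N (Finsupp.single a 1) = 1 := by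
  rw [nu, Finsupp.sum_single_index] <;> rfl

lemma apply_natAbs_le_nu (f : V N) (a : Fin r × (FreeGroup (Fin r) ⧸ N)) :
    (f a).natAbs ≤ nu N f := by
  classical
  by_cases h : f a = 0
  · simp [h]
  · rw [nu]
    exact Finset.single_le_sum (f := fun a => (f a).natAbs) (fun _ _ => Nat.zero_le _)
      (Finsupp.mem_support_iff.mpr h)

end Norm

lemma commutator_le_ker : ⁅N, N⁆ ≤ (mu N).ker := by
  rw [Subgroup.commutator_le]
  intro g hg h hh
  rw [MonoidHom.mem_ker, map_commutatorElement, commutatorElement_eq_one_iff_mul_comm]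
  have hg1 : (mu N g).right = 1 := by rw [mu_right]; exact (QuotientGroup.eq_one_iff g).mpr hg
  have hh1 : (mu N h).right = 1 := by rw [mu_right]; exact (QuotientGroup.eq_one_iff h).mpr hh
  ext
  · rw [SemidirectProduct.mul_left, SemidirectProduct.mul_left, hg1, hh1, map_one,
      MulAut.one_apply, MulAut.one_apply, mul_comm]
  · rw [SemidirectProduct.mul_right, SemidirectProduct.mul_right, hg1, hh1]

lemma nu_toAdd_left_inv (m : Multiplicative (V N) ⋊[phi N] (FreeGroup (Fin r) ⧸ N)) :
    nu N (Multiplicative.toAdd (m⁻¹).left) = nu N (Multiplicative.toAdd m.left) := by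
  rw [SemidirectProduct.inv_left, phi_apply, toAdd_inv, nu_shift, nu_neg]

lemma nu_toAdd_left_mu_of (i : Fin r) :
    nu N (Multiplicative.toAdd (mu N (FreeGroup.of i)).left) = 1 := by
  have : mu N (FreeGroup.of i) =
      ⟨Multiplicative.ofAdd (Finsupp.single (i, 1) 1), QuotientGroup.mk (FreeGroup.of i)⟩ := by
    simp [mu]
  rw [this]
  show nu N (Finsupp.single (i, (1 : FreeGroup (Fin r) ⧸ N)) 1) = 1
  exact nu_single N _

end MagnusAux

open MagnusAux in
/-- every cyclic subgroup of a free solvable group `S_{r,d}` is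
undistorted: for nontrivial `x` and any integer `k`,
`d(1, x^k) ≥ |k|/2`, hence the distortion function of `⟨x⟩` is at most `2n`. -/
theorem cyclic_subgroups_of_free_solvable_undistorted (r d : ℕ) (hr : 1 ≤ r) (hd : 1 ≤ d)
    (x : FreeSolvable r d) (hx : x ≠ 1) :
    (∀ k : ℤ, k.natAbs ≤ 2 * wordLength
        (Set.range fun i : Fin r => (QuotientGroup.mk (FreeGroup.of i) : FreeSolvable r d))
        (x ^ k)) ∧
    (∀ n : ℕ, ∀ k : ℤ, wordLength
        (Set.range fun i : Fin r => (QuotientGroup.mk (FreeGroup.of i) : FreeSolvable r d))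
        (x ^ k) ≤ n → k.natAbs ≤ 2 * n) := by
  classical
  set F := FreeGroup (Fin r)
  set S : Set (FreeSolvable r d) :=
    Set.range fun i : Fin r => (QuotientGroup.mk (FreeGroup.of i) : FreeSolvable r d) with hS
  obtain ⟨w₀, hw0⟩ := QuotientGroup.mk_surjective x
  have hw0d : w₀ ∉ derivedSeries F d := fun hmem =>
    hx (by rw [← hw0]; exact (QuotientGroup.eq_one_iff w₀).mpr hmem)
  have hP : ∃ n, w₀ ∉ derivedSeries F n := ⟨d, hw0d⟩
  set e := Nat.find hP with he_def
  have he : w₀ ∉ derivedSeries F e := Nat.find_spec hP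
  have he0 : 0 < e := Nat.pos_of_ne_zero fun h =>
    he (by rw [h, derivedSeries_zero]; trivial)
  have hed : e ≤ d := Nat.find_le hw0d
  set N := derivedSeries F (e - 1) with hNdef
  have hNmem : w₀ ∈ N := of_not_not (Nat.find_min hP (Nat.sub_lt he0 one_pos))
  have hSe : derivedSeries F e = ⁅N, N⁆ := by
    conv_lhs => rw [← Nat.succ_pred_eq_of_pos he0]
    rw [derivedSeries_succ]
    rfl
  have hanti : ∀ m n : ℕ, m ≤ n → derivedSeries F n ≤ derivedSeries F m := by
    intro m n h
    induction h with
    | refl => exact le_rfl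
    | step _ ih =>
      exact le_trans (by rw [derivedSeries_succ]; exact Subgroup.commutator_le_left _ _) ih
  have hker : derivedSeries F d ≤ (mu N).ker :=
    le_trans (le_trans (hanti e d hed) (le_of_eq hSe)) (commutator_le_ker N)
  set mhat : FreeSolvable r d →* _ := QuotientGroup.lift (derivedSeries F d) (mu N) hker
    with hmhat
  set t : (F ⧸ N) → F := fun q => if q = 1 then 1 else Quotient.out q with htdef
  have ht : ∀ q, (QuotientGroup.mk (t q) : F ⧸ N) = q := by
    intro q
    by_cases h : q = 1
    · rw [htdef]; simp only [if_pos h, h]; rfl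
    · simp only [htdef, if_neg h]
      exact Quotient.out_eq' q
  have ht1 : t 1 = 1 := by simp [htdef]
  have hright : (mu N w₀).right = 1 := by
    rw [mu_right]; exact (QuotientGroup.eq_one_iff w₀).mpr hNmem
  have hDv : Dv N w₀ ≠ 0 := by
    intro h0
    exact he (by rw [hSe]; exact mem_commutator_of_Dv_eq_zero N t ht ht1 w₀ hNmem h0)
  obtain ⟨a₀, ha₀⟩ : ∃ a, Dv N w₀ a ≠ 0 := by
    by_contra h
    push_neg at h
    exact hDv (Finsupp.ext h)
  have hmx : mhat x = SemidirectProduct.inl (mu N w₀).left := by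
    rw [← hw0, hmhat, QuotientGroup.lift_mk']
    ext
    · rw [SemidirectProduct.left_inl]
    · rw [SemidirectProduct.right_inl, hright]
  have hlow : ∀ k : ℤ, k.natAbs ≤ nu N (Multiplicative.toAdd (mhat (x ^ k)).left) := by
    intro k
    rw [map_zpow, hmx, ← map_zpow, SemidirectProduct.left_inl, toAdd_zpow]
    calc k.natAbs = k.natAbs * 1 := (mul_one _).symm
    _ ≤ k.natAbs * (Dv N w₀ a₀).natAbs :=
        Nat.mul_le_mul_left _ (Nat.one_le_iff_ne_zero.mpr (Int.natAbs_ne_zero.mpr ha₀))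
    _ = ((k • Dv N w₀) a₀).natAbs := by
        rw [Finsupp.smul_apply, smul_eq_mul, Int.natAbs_mul]
    _ ≤ nu N (k • Dv N w₀) := apply_natAbs_le_nu N _ a₀
  have hone : ∀ s ∈ S, nu N (Multiplicative.toAdd (mhat s).left) = 1 := by
    rintro s ⟨i, rfl⟩
    rw [hmhat, QuotientGroup.lift_mk']
    exact nu_toAdd_left_mu_of N i
  have hbound : ∀ l : List (FreeSolvable r d), (∀ s ∈ l, s ∈ S ∨ s⁻¹ ∈ S) →
      nu N (Multiplicative.toAdd (mhat l.prod).left) ≤ l.length := by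
    intro l
    induction l with
    | nil =>
      intro _
      simp only [List.prod_nil, map_one]
      show nu N (Multiplicative.toAdd (1 : Multiplicative (V N))) ≤ 0
      simp [nu]
    | cons sh tl ih =>
      intro hmem
      have h1 : nu N (Multiplicative.toAdd (mhat sh).left) ≤ 1 := by
        rcases hmem sh List.mem_cons_self with h | h
        · exact le_of_eq (hone sh h)
        · have h' := hone sh⁻¹ h
          rw [map_inv, nu_toAdd_left_inv N (mhat sh)] at h'
          exact le_of_eq h'
      have h2 := ih fun s hs => hmem s (List.mem_cons_of_mem _ hs)
      rw [List.prod_cons, map_mul, SemidirectProduct.mul_left, toAdd_mul, phi_apply]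
      calc nu N (Multiplicative.toAdd (mhat sh).left +
            shift N (mhat sh).right (Multiplicative.toAdd (mhat tl.prod).left))
          ≤ nu N (Multiplicative.toAdd (mhat sh).left) +
            nu N (shift N (mhat sh).right (Multiplicative.toAdd (mhat tl.prod).left)) :=
            nu_add_le N _ _
        _ ≤ 1 + tl.length := by rw [nu_shift]; exact Nat.add_le_add h1 h2
        _ = (sh :: tl).length := by rw [List.length_cons, Nat.add_comm]
  have hexists : ∀ g : FreeSolvable r d,
      ∃ l : List (FreeSolvable r d), (∀ s ∈ l, s ∈ S ∨ s⁻¹ ∈ S) ∧ l.prod = g := by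
    intro g
    obtain ⟨u, rfl⟩ := QuotientGroup.mk_surjective g
    induction u using FreeGroup.induction_on with
    | C1 => exact ⟨[], by simp⟩
    | of i =>
      refine ⟨[QuotientGroup.mk (FreeGroup.of i)], ?_,
        by simp only [List.prod_singleton]⟩
      intro s hs
      rw [List.mem_singleton] at hs
      exact Or.inl (hs ▸ ⟨i, rfl⟩)
    | inv_of i _ =>
      refine ⟨[(QuotientGroup.mk (FreeGroup.of i) : FreeSolvable r d)⁻¹], ?_, ?_⟩
      · intro s hs
        rw [List.mem_singleton] at hs
        exact Or.inr (by rw [hs, inv_inv]; exact ⟨i, rfl⟩)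
      · simp only [List.prod_singleton, ← QuotientGroup.mk_inv]
    | mul u v hu hv =>
      obtain ⟨l₁, hl₁, hp₁⟩ := hu
      obtain ⟨l₂, hl₂, hp₂⟩ := hv
      refine ⟨l₁ ++ l₂, ?_, ?_⟩
      · intro s hs
        rcases List.mem_append.mp hs with h | h
        · exact hl₁ s h
        · exact hl₂ s h
      · rw [List.prod_append, hp₁, hp₂, QuotientGroup.mk_mul]
  have key : ∀ k : ℤ, k.natAbs ≤ wordLength S (x ^ k) := by
    intro k
    obtain ⟨l, hl, hlp⟩ := hexists (x ^ k)
    have hmemInf : wordLength S (x ^ k) ∈ {n | ∃ l : List (FreeSolvable r d),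
        (∀ s ∈ l, s ∈ S ∨ s⁻¹ ∈ S) ∧ l.prod = x ^ k ∧ l.length = n} :=
      Nat.sInf_mem ⟨l.length, l, hl, hlp, rfl⟩
    obtain ⟨l', hl', hlp', hll'⟩ := hmemInf
    calc k.natAbs ≤ nu N (Multiplicative.toAdd (mhat (x ^ k)).left) := hlow k
      _ = nu N (Multiplicative.toAdd (mhat l'.prod).left) := by rw [hlp']
      _ ≤ l'.length := hbound l' hl'
      _ = wordLength S (x ^ k) := hll'
  constructor
  · intro k
    exact le_trans (key k) (Nat.le_mul_of_pos_left _ two_pos)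
  · intro n k hle
    calc k.natAbs ≤ wordLength S (x ^ k) := key k
      _ ≤ n := hle
      _ ≤ 2 * n := Nat.le_mul_of_pos_left n two_pos
end

section
/- Let A, B be groups, x ∈ B of infinite order, y ∈ B commuting with x and with y² ∉ ⟨x⟩, and a ∈ A nontrivial. For n ≥ 1 define f, g: B → A supported on {e_B, y} and {x^{-n}, x^n y} respectively, each taking value a on its support. Define h: B → A by h(x^i y) = a for 0 ≤ i ≤ n−1, h(x^{-i}) = a^{-1} for 1 ≤ i ≤ n, and h = e_A elsewhere. Then (f, x)·(h, e_B) = (h, e_B)·(g, x) in A ≀ B, i.e. (h, e_B) conjugates (f,x) to (g,x). -/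
open Classical in
/-- with `x` of infinite order, `y` commuting with `x`,
`y² ∉ ⟨x⟩` and `a ≠ 1`, the element `(h, e_B)` below conjugates `(f, x)`
to `(g, x)` in `A ≀ B`, where `f` is supported on `{e_B, y}` with value `a`,
`g` is supported on `{x^{-n}, x^n y}` with value `a`, and
`h(x^i y) = a` for `0 ≤ i ≤ n-1`, `h(x^{-i}) = a⁻¹` for `1 ≤ i ≤ n`. -/
theorem wreath_explicit_conjugator {A B : Type*} [Group A] [Group B]
    (x y : B) (a : A) (n : ℕ) (hn : 1 ≤ n)
    (hx : ¬ IsOfFinOrder x) (hxy : Commute x y)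
    (hy : y ^ 2 ∉ Subgroup.zpowers x) (ha : a ≠ 1) :
    (⟨(fun z => if z = 1 ∨ z = y then a else 1), x⟩ *
        ⟨(fun z =>
          if ∃ i : ℕ, i < n ∧ z = x ^ (i : ℤ) * y then a
          else if ∃ i : ℕ, 1 ≤ i ∧ i ≤ n ∧ z = x ^ (-(i : ℤ)) then a⁻¹
          else 1), 1⟩ : WreathProduct A B) =
      ⟨(fun z =>
          if ∃ i : ℕ, i < n ∧ z = x ^ (i : ℤ) * y then a
          else if ∃ i : ℕ, 1 ≤ i ∧ i ≤ n ∧ z = x ^ (-(i : ℤ)) then a⁻¹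
          else 1), 1⟩ *
      ⟨(fun z => if z = x ^ (-(n : ℤ)) ∨ z = x ^ (n : ℤ) * y then a else 1), x⟩ := by
  have inj : Function.Injective (fun i : ℤ => x ^ i) :=
    injective_zpow_iff_not_isOfFinOrder.mpr hx
  have hy' : ∀ i : ℤ, y ≠ x ^ i := by
    intro i h
    refine hy ⟨2 * i, ?_⟩
    rw [h]
    group
  have coset : ∀ i j : ℤ, x ^ i * y ≠ x ^ j := by
    intro i j h
    refine hy' (j - i) ?_
    have : y = (x ^ i)⁻¹ * x ^ j := eq_inv_mul_of_mul_eq h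
    rw [this]; group
  have injn : ∀ i j : ℤ, x ^ i = x ^ j → i = j := fun i j h => inj h
  ext z
  · rw [SemidirectProduct.mul_left, SemidirectProduct.mul_left]
    simp only [SemidirectProduct.mul_left, shiftAut, MonoidHom.coe_mk, OneHom.coe_mk,
      MulEquiv.coe_mk, Equiv.coe_fn_mk, Pi.mul_apply, map_one, MulAut.one_apply]
    by_cases h1 : ∃ j : ℕ, j ≤ n ∧ z = x ^ (j : ℤ) * y
    · obtain ⟨j, hj, rfl⟩ := h1
      have key : x⁻¹ * (x ^ (j : ℤ) * y) = x ^ ((j : ℤ) - 1) * y := by group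
      rw [key]
      have e1 : (x ^ (j : ℤ) * y = 1 ∨ x ^ (j : ℤ) * y = y) ↔ j = 0 := by
        constructor
        · rintro (h | h)
          · exact absurd (h.trans (zpow_zero x).symm) (coset _ 0)
          · have : x ^ (j : ℤ) = x ^ (0 : ℤ) := by
              rw [zpow_zero]; exact mul_right_cancel (h.trans (one_mul y).symm)
            exact_mod_cast injn _ _ this
        · rintro rfl; right; simp
      have e2 : (∃ i : ℕ, i < n ∧ x ^ ((j : ℤ) - 1) * y = x ^ (i : ℤ) * y) ↔ 1 ≤ j := by
        constructor
        · rintro ⟨i, _, h⟩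
          have := injn _ _ (mul_right_cancel h)
          omega
        · intro h
          refine ⟨j - 1, by omega, ?_⟩
          congr 1
          congr 1
          omega
      have e3 : ¬ ∃ i : ℕ, 1 ≤ i ∧ i ≤ n ∧ x ^ ((j : ℤ) - 1) * y = x ^ (-(i : ℤ)) := by
        rintro ⟨i, _, _, h⟩; exact coset _ _ h
      have e4 : (∃ i : ℕ, i < n ∧ x ^ (j : ℤ) * y = x ^ (i : ℤ) * y) ↔ j < n := by
        constructor
        · rintro ⟨i, hi, h⟩
          have := injn _ _ (mul_right_cancel h)
          omega
        · intro h; exact ⟨j, h, rfl⟩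
      have e5 : ¬ ∃ i : ℕ, 1 ≤ i ∧ i ≤ n ∧ x ^ (j : ℤ) * y = x ^ (-(i : ℤ)) := by
        rintro ⟨i, _, _, h⟩; exact coset _ _ h
      have e6 : (x ^ (j : ℤ) * y = x ^ (-(n : ℤ)) ∨ x ^ (j : ℤ) * y = x ^ (n : ℤ) * y) ↔ j = n := by
        constructor
        · rintro (h | h)
          · exact absurd h (coset _ _)
          · have := injn _ _ (mul_right_cancel h)
            omega
        · rintro rfl; right; rfl
      simp only [e1, e2, e3, e4, e5, e6, if_false]
      split_ifs <;> first | (exfalso; omega) | group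
    · by_cases h2 : ∃ j : ℕ, j ≤ n ∧ z = x ^ (-(j : ℤ))
      · obtain ⟨j, hj, rfl⟩ := h2
        have key : x⁻¹ * (x ^ (-(j : ℤ))) = x ^ (-((j : ℤ) + 1)) := by group
        rw [key]
        have e1 : (x ^ (-(j : ℤ)) = 1 ∨ x ^ (-(j : ℤ)) = y) ↔ j = 0 := by
          constructor
          · rintro (h | h)
            · have : x ^ (-(j : ℤ)) = x ^ (0 : ℤ) := by rw [zpow_zero]; exact h
              have := injn _ _ this
              omega
            · exact absurd h.symm (hy' _)
          · rintro rfl; left; simp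
        have e2 : ¬ ∃ i : ℕ, i < n ∧ x ^ (-((j : ℤ) + 1)) = x ^ (i : ℤ) * y := by
          rintro ⟨i, _, h⟩; exact coset _ _ h.symm
        have e3 : (∃ i : ℕ, 1 ≤ i ∧ i ≤ n ∧ x ^ (-((j : ℤ) + 1)) = x ^ (-(i : ℤ))) ↔ j < n := by
          constructor
          · rintro ⟨i, _, hi, h⟩
            have := injn _ _ h
            omega
          · intro h
            refine ⟨j + 1, by omega, by omega, ?_⟩
            congr 1 <;> omega
        have e4 : ¬ ∃ i : ℕ, i < n ∧ x ^ (-(j : ℤ)) = x ^ (i : ℤ) * y := by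
          rintro ⟨i, _, h⟩; exact coset _ _ h.symm
        have e5 : (∃ i : ℕ, 1 ≤ i ∧ i ≤ n ∧ x ^ (-(j : ℤ)) = x ^ (-(i : ℤ))) ↔ 1 ≤ j := by
          constructor
          · rintro ⟨i, hi, _, h⟩
            have := injn _ _ h
            omega
          · intro h; exact ⟨j, h, hj, rfl⟩
        have e6 : (x ^ (-(j : ℤ)) = x ^ (-(n : ℤ)) ∨ x ^ (-(j : ℤ)) = x ^ (n : ℤ) * y) ↔ j = n := by
          constructor
          · rintro (h | h)
            · have := injn _ _ h
              omega
            · exact absurd h.symm (coset _ _)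
          · rintro rfl; left; rfl
        simp only [e1, e2, e3, e4, e5, e6, if_false]
        split_ifs <;> first | (exfalso; omega) | group
      · have e1 : ¬ (z = 1 ∨ z = y) := by
          rintro (rfl | rfl)
          · exact h2 ⟨0, by omega, by simp⟩
          · exact h1 ⟨0, by omega, by simp⟩
        have e2 : ¬ ∃ i : ℕ, i < n ∧ x⁻¹ * z = x ^ (i : ℤ) * y := by
          rintro ⟨i, hi, h⟩
          refine h1 ⟨i + 1, by omega, ?_⟩
          have : z = x * (x ^ (i : ℤ) * y) := by rw [← h]; group
          rw [this]
          have : x * (x ^ (i : ℤ) * y) = x ^ ((i : ℤ) + 1) * y := by group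
          rw [this]
          congr 2 <;> omega
        have e3 : ¬ ∃ i : ℕ, 1 ≤ i ∧ i ≤ n ∧ x⁻¹ * z = x ^ (-(i : ℤ)) := by
          rintro ⟨i, hi1, hi, h⟩
          refine h2 ⟨i - 1, by omega, ?_⟩
          have : z = x * x ^ (-(i : ℤ)) := by rw [← h]; group
          rw [this]
          have : x * x ^ (-(i : ℤ)) = x ^ (-((i : ℤ) - 1)) := by group
          rw [this]
          congr 2
          omega
        have e4 : ¬ ∃ i : ℕ, i < n ∧ z = x ^ (i : ℤ) * y := by
          rintro ⟨i, hi, h⟩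
          exact h1 ⟨i, by omega, h⟩
        have e5 : ¬ ∃ i : ℕ, 1 ≤ i ∧ i ≤ n ∧ z = x ^ (-(i : ℤ)) := by
          rintro ⟨i, _, hi, h⟩
          exact h2 ⟨i, hi, h⟩
        have e6 : ¬ (z = x ^ (-(n : ℤ)) ∨ z = x ^ (n : ℤ) * y) := by
          rintro (rfl | rfl)
          · exact h2 ⟨n, le_refl n, rfl⟩
          · exact h1 ⟨n, le_refl n, rfl⟩
        rw [if_neg e1, if_neg e2, if_neg e3, if_neg e4, if_neg e5, if_neg e6]
  · simp
end
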